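/- arXiv:0906.5089 — 2 statements merged into one kernel-verified Lean document; each statement's English description precedes it below -/
import Mathlib

section
/- For every two rooted (respectively unrooted) phylogenies T1 and T2 over the same taxon set, the Hausdorff triplet (respectively quartet) distance satisfies d_Haus(T1,T2) ≥ |D(T1,T2)| + (2/3)·max{ |R1(T1,T2)|, |R2(T1,T2)| }. -/
open Finset

attribute [local instance] Classical.propDecidable

/-- A rooted phylogenetic tree over the taxon set `Fin n`, encoded by its hierarchy of
clusters: for each node of the tree, the set of leaves descending from that node.
The conditions say that the whole leaf set and all singletons are clusters, the empty
set is not a cluster, and that the family is laminar.  Such families correspond exactly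
to rooted phylogenies in which every internal node has at least two children. -/
structure RTree (n : ℕ) where
  clusters : Finset (Finset (Fin n))
  univ_mem : Finset.univ ∈ clusters
  singleton_mem : ∀ x : Fin n, {x} ∈ clusters
  empty_not_mem : ∅ ∉ clusters
  laminar : ∀ C ∈ clusters, ∀ D ∈ clusters, C ⊆ D ∨ D ⊆ C ∨ C ∩ D = ∅

/-- All triplets (3-element subsets) of `Fin n`. -/
def triplets (n : ℕ) : Finset (Finset (Fin n)) :=
  Finset.powersetCard 3 Finset.univ

/-- The cluster family of the restriction `T|X`, for a rooted tree with cluster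
family `F`: the nonempty intersections of clusters with `X`. -/
noncomputable def famRestrict {n : ℕ} (F : Finset (Finset (Fin n))) (X : Finset (Fin n)) :
    Finset (Finset (Fin n)) :=
  (F.image (· ∩ X)).filter (· ≠ ∅)

/-- A triplet `X` is resolved in a rooted tree with cluster family `F` iff the
restriction `T|X` is fully resolved, equivalently iff some cluster contains exactly
two of the three elements of `X`. -/
def famResolved {n : ℕ} (F : Finset (Finset (Fin n))) (X : Finset (Fin n)) : Prop :=
  ∃ C ∈ F, (C ∩ X).card = 2

/-- Triplets resolved, identically, in both trees. -/
noncomputable def famSetS {n : ℕ} (F G : Finset (Finset (Fin n))) :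
    Finset (Finset (Fin n)) :=
  (triplets n).filter fun X =>
    famResolved F X ∧ famResolved G X ∧ famRestrict F X = famRestrict G X

/-- Triplets resolved, differently, in both trees. -/
noncomputable def famSetD {n : ℕ} (F G : Finset (Finset (Fin n))) :
    Finset (Finset (Fin n)) :=
  (triplets n).filter fun X =>
    famResolved F X ∧ famResolved G X ∧ famRestrict F X ≠ famRestrict G X

/-- Triplets resolved in the first tree but not in the second. -/
noncomputable def famSetR1 {n : ℕ} (F G : Finset (Finset (Fin n))) :
    Finset (Finset (Fin n)) :=
  (triplets n).filter fun X => famResolved F X ∧ ¬ famResolved G X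

/-- Triplets resolved in the second tree but not in the first. -/
noncomputable def famSetR2 {n : ℕ} (F G : Finset (Finset (Fin n))) :
    Finset (Finset (Fin n)) :=
  (triplets n).filter fun X => famResolved G X ∧ ¬ famResolved F X

/-- Triplets unresolved in both trees. -/
noncomputable def famSetU {n : ℕ} (F G : Finset (Finset (Fin n))) :
    Finset (Finset (Fin n)) :=
  (triplets n).filter fun X => ¬ famResolved F X ∧ ¬ famResolved G X

/-- The parametric triplet distance, at the level of cluster families. -/
noncomputable def famPdist {n : ℕ} (p : ℝ) (F G : Finset (Finset (Fin n))) : ℝ :=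
  ((famSetD F G).card : ℝ) +
    p * (((famSetR1 F G).card : ℝ) + ((famSetR2 F G).card : ℝ))

namespace RTree

variable {n : ℕ}

/-- The cluster family of the restriction `T|X`. -/
noncomputable def restrict (T : RTree n) (X : Finset (Fin n)) : Finset (Finset (Fin n)) :=
  famRestrict T.clusters X

/-- The triplet `X` is resolved in `T`, i.e. `T|X` is fully resolved. -/
def Resolved (T : RTree n) (X : Finset (Fin n)) : Prop :=
  famResolved T.clusters X

/-- A rooted phylogeny is fully resolved (all internal nodes have exactly two
children) iff every triplet is resolved in it. -/
def FullyResolved (T : RTree n) : Prop :=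
  ∀ X ∈ triplets n, T.Resolved X

noncomputable def setS (T₁ T₂ : RTree n) : Finset (Finset (Fin n)) :=
  famSetS T₁.clusters T₂.clusters

noncomputable def setD (T₁ T₂ : RTree n) : Finset (Finset (Fin n)) :=
  famSetD T₁.clusters T₂.clusters

noncomputable def setR1 (T₁ T₂ : RTree n) : Finset (Finset (Fin n)) :=
  famSetR1 T₁.clusters T₂.clusters

noncomputable def setR2 (T₁ T₂ : RTree n) : Finset (Finset (Fin n)) :=
  famSetR2 T₁.clusters T₂.clusters

noncomputable def setU (T₁ T₂ : RTree n) : Finset (Finset (Fin n)) :=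
  famSetU T₁.clusters T₂.clusters

/-- The parametric triplet distance `d⁽ᵖ⁾(T₁,T₂)`. -/
noncomputable def pdist (p : ℝ) (T₁ T₂ : RTree n) : ℝ :=
  famPdist p T₁.clusters T₂.clusters

theorem clusters_injective : Function.Injective (clusters (n := n)) := by
  rintro ⟨s₁, _, _, _, _⟩ ⟨s₂, _, _, _, _⟩ h
  simp only [mk.injEq] at h ⊢
  exact h

noncomputable instance : Fintype (RTree n) :=
  Fintype.ofInjective clusters clusters_injective

end RTree

/-- An unrooted phylogenetic tree over the taxon set `Fin n`, encoded by its split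
system: the collection of all sets of leaves lying on one side of some edge of the
tree.  By the splits-equivalence (Buneman) theorem, the families satisfying these
conditions (all trivial splits present, closure under complementation, pairwise
compatibility) correspond exactly to unrooted phylogenies in which every internal
node has degree at least three. -/
structure UTree (n : ℕ) where
  splits : Finset (Finset (Fin n))
  empty_not_mem : ∅ ∉ splits
  trivial_mem : ∀ x : Fin n, ({x} : Finset (Fin n)) = Finset.univ ∨ {x} ∈ splits
  compl_mem : ∀ A ∈ splits, Finset.univ \ A ∈ splits
  compat : ∀ A ∈ splits, ∀ B ∈ splits, A ⊆ B ∨ B ⊆ A ∨ A ∩ B = ∅ ∨ A ∪ B = Finset.univ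

/-- All quartets (4-element subsets) of `Fin n`. -/
def quartets (n : ℕ) : Finset (Finset (Fin n)) :=
  Finset.powersetCard 4 Finset.univ

/-- The split system of the restriction `T|X`, for an unrooted tree with split
system `F`: the proper nonempty intersections of split sides with `X`. -/
noncomputable def famRestrictU {n : ℕ} (F : Finset (Finset (Fin n))) (X : Finset (Fin n)) :
    Finset (Finset (Fin n)) :=
  (F.image (· ∩ X)).filter fun A => A ≠ ∅ ∧ A ≠ X

/-- A quartet `X` is resolved in an unrooted tree with split system `F` iff the
restriction `T|X` is fully resolved, equivalently iff some split side contains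
exactly two of the four elements of `X`. -/
def famResolvedU {n : ℕ} (F : Finset (Finset (Fin n))) (X : Finset (Fin n)) : Prop :=
  ∃ A ∈ F, (A ∩ X).card = 2

/-- Quartets resolved, identically, in both trees. -/
noncomputable def famSetSU {n : ℕ} (F G : Finset (Finset (Fin n))) :
    Finset (Finset (Fin n)) :=
  (quartets n).filter fun X =>
    famResolvedU F X ∧ famResolvedU G X ∧ famRestrictU F X = famRestrictU G X

/-- Quartets resolved, differently, in both trees. -/
noncomputable def famSetDU {n : ℕ} (F G : Finset (Finset (Fin n))) :
    Finset (Finset (Fin n)) :=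
  (quartets n).filter fun X =>
    famResolvedU F X ∧ famResolvedU G X ∧ famRestrictU F X ≠ famRestrictU G X

/-- Quartets resolved in the first tree but not in the second. -/
noncomputable def famSetR1U {n : ℕ} (F G : Finset (Finset (Fin n))) :
    Finset (Finset (Fin n)) :=
  (quartets n).filter fun X => famResolvedU F X ∧ ¬ famResolvedU G X

/-- Quartets resolved in the second tree but not in the first. -/
noncomputable def famSetR2U {n : ℕ} (F G : Finset (Finset (Fin n))) :
    Finset (Finset (Fin n)) :=
  (quartets n).filter fun X => famResolvedU G X ∧ ¬ famResolvedU F X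

/-- Quartets unresolved in both trees. -/
noncomputable def famSetUU {n : ℕ} (F G : Finset (Finset (Fin n))) :
    Finset (Finset (Fin n)) :=
  (quartets n).filter fun X => ¬ famResolvedU F X ∧ ¬ famResolvedU G X

/-- The parametric quartet distance, at the level of split systems. -/
noncomputable def famPdistU {n : ℕ} (p : ℝ) (F G : Finset (Finset (Fin n))) : ℝ :=
  ((famSetDU F G).card : ℝ) +
    p * (((famSetR1U F G).card : ℝ) + ((famSetR2U F G).card : ℝ))

namespace UTree

variable {n : ℕ}

/-- The split system of the restriction `T|X`. -/
noncomputable def restrict (T : UTree n) (X : Finset (Fin n)) : Finset (Finset (Fin n)) :=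
  famRestrictU T.splits X

/-- The quartet `X` is resolved in `T`, i.e. `T|X` is fully resolved. -/
def Resolved (T : UTree n) (X : Finset (Fin n)) : Prop :=
  famResolvedU T.splits X

/-- An unrooted phylogeny is fully resolved (all internal nodes have degree exactly
three) iff every quartet is resolved in it. -/
def FullyResolved (T : UTree n) : Prop :=
  ∀ X ∈ quartets n, T.Resolved X

noncomputable def setS (T₁ T₂ : UTree n) : Finset (Finset (Fin n)) :=
  famSetSU T₁.splits T₂.splits

noncomputable def setD (T₁ T₂ : UTree n) : Finset (Finset (Fin n)) :=
  famSetDU T₁.splits T₂.splits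

noncomputable def setR1 (T₁ T₂ : UTree n) : Finset (Finset (Fin n)) :=
  famSetR1U T₁.splits T₂.splits

noncomputable def setR2 (T₁ T₂ : UTree n) : Finset (Finset (Fin n)) :=
  famSetR2U T₁.splits T₂.splits

noncomputable def setU (T₁ T₂ : UTree n) : Finset (Finset (Fin n)) :=
  famSetUU T₁.splits T₂.splits

/-- The parametric quartet distance `d⁽ᵖ⁾(T₁,T₂)`. -/
noncomputable def pdist (p : ℝ) (T₁ T₂ : UTree n) : ℝ :=
  famPdistU p T₁.splits T₂.splits

theorem splits_injective : Function.Injective (splits (n := n)) := by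
  rintro ⟨s₁, _, _, _, _⟩ ⟨s₂, _, _, _, _⟩ h
  simp only [mk.injEq] at h ⊢
  exact h

noncomputable instance : Fintype (UTree n) :=
  Fintype.ofInjective splits splits_injective

end UTree

namespace RTree

variable {n : ℕ}

/-- The set `F(T)` of full refinements of `T`: the fully resolved trees from which
`T` can be obtained by contracting internal edges, i.e. whose cluster family
contains that of `T`. -/
def FullRef (T : RTree n) : Set (RTree n) :=
  {t | t.FullyResolved ∧ T.clusters ⊆ t.clusters}

/-- The triplet distance between two (fully resolved) rooted trees: the number of
triplets resolved differently in the two trees. -/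
noncomputable def tripletDist (T₁ T₂ : RTree n) : ℝ :=
  ((setD T₁ T₂).card : ℝ)

/-- The Hausdorff triplet distance between two rooted phylogenies. -/
noncomputable def dHaus (T₁ T₂ : RTree n) : ℝ :=
  max (⨆ t₁ : T₁.FullRef, ⨅ t₂ : T₂.FullRef, tripletDist t₁.1 t₂.1)
      (⨆ t₂ : T₂.FullRef, ⨅ t₁ : T₁.FullRef, tripletDist t₁.1 t₂.1)

end RTree

namespace UTree

variable {n : ℕ}

/-- The set `F(T)` of full refinements of `T`: the fully resolved trees from which
`T` can be obtained by contracting internal edges, i.e. whose split system contains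
that of `T`. -/
def FullRef (T : UTree n) : Set (UTree n) :=
  {t | t.FullyResolved ∧ T.splits ⊆ t.splits}

/-- The quartet distance between two (fully resolved) unrooted trees: the number of
quartets resolved differently in the two trees. -/
noncomputable def quartetDist (T₁ T₂ : UTree n) : ℝ :=
  ((setD T₁ T₂).card : ℝ)

/-- The Hausdorff quartet distance between two unrooted phylogenies. -/
noncomputable def dHaus (T₁ T₂ : UTree n) : ℝ :=
  max (⨆ t₁ : T₁.FullRef, ⨅ t₂ : T₂.FullRef, quartetDist t₁.1 t₂.1)
      (⨆ t₂ : T₂.FullRef, ⨅ t₁ : T₁.FullRef, quartetDist t₁.1 t₂.1)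

end UTree


/-!
Refining every cluster of `T₁` by a caterpillar whose children are ordered by a permutation `π`
of the taxa (through fixed representatives) gives a full refinement `t₁(π) ∈ F(T₁)`. Triplets
resolved in both trees keep their restrictions in all refinements, so `D(T₁,T₂) ⊆ D(t₁(π),t₂)`
for every `t₂ ∈ F(T₂)`. A triplet of `R₂(T₁,T₂)` has its three elements in distinct children of
the lowest cluster of `T₁` meeting it twice, and `t₁(π)` splits off the one coming first under
`π`; by symmetry under transpositions this agrees with `T₂` for at most a third of all `π`.
Averaging over `π` gives one `t₁` with `d(t₁,t₂) ≥ |D| + (2/3)|R₂|` for all `t₂`, and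
exchanging the trees handles `R₁`. Unrooted trees are rooted at a taxon, refined in the same
way and unrooted again; a quartet then meets its lowest cluster in three or in four elements,
and in both cases at most a third of the orders reproduce the split of `T₂`.
-/

/-! ### Averaging -/

theorem exists_mul_card_filter_le {ι α : Type*} [Fintype ι] [Nonempty ι] (R : Finset α)
    (p : ι → α → Prop) [∀ i X, Decidable (p i X)] (k : ℕ)
    (h : ∀ X ∈ R, k * #(univ.filter fun i => p i X) ≤ Fintype.card ι) :
    ∃ i, k * #(R.filter (p i)) ≤ #R := by
  have hsum : ∑ i, k * #(R.filter (p i)) ≤ ∑ _i : ι, #R :=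
    calc ∑ i, k * #(R.filter (p i))
        = ∑ X ∈ R, k * #(univ.filter fun i => p i X) := by
          simp only [card_filter, ← mul_sum]
          rw [sum_comm]
      _ ≤ ∑ _X ∈ R, Fintype.card ι := sum_le_sum h
      _ = ∑ _i : ι, #R := by simp [mul_comm]
  obtain ⟨i, -, hi⟩ := exists_le_of_sum_le univ_nonempty hsum
  exact ⟨i, hi⟩

section Abstract

/- `res t X` and `rst t X` stand for "`X` is resolved in `t`" and "the restriction `t|X`", so
that rooted and unrooted trees share the argument. -/
variable {α β γ : Type*} [DecidableEq γ] (U : Finset α) (res : β → α → Prop)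
  (rst : β → α → γ)

theorem card_add_card_filter_le_card {T₁ T₂ t₁ t₂ : β} (ht₁ : ∀ X ∈ U, res t₁ X)
    (h₁ : ∀ X ∈ U, res T₁ X → rst t₁ X = rst T₁ X)
    (h₂ : ∀ X ∈ U, res T₂ X → res t₂ X ∧ rst t₂ X = rst T₂ X) :
    #(U.filter fun X => res T₁ X ∧ res T₂ X ∧ rst T₁ X ≠ rst T₂ X) +
        #((U.filter fun X => res T₂ X ∧ ¬ res T₁ X).filter
          fun X => rst t₁ X ≠ rst T₂ X) ≤
      #(U.filter fun X => res t₁ X ∧ res t₂ X ∧ rst t₁ X ≠ rst t₂ X) := by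
  rw [← card_union_of_disjoint]
  · refine card_le_card fun X hX => ?_
    simp only [mem_union, mem_filter] at hX ⊢
    rcases hX with ⟨hU, h1, h2, hne⟩ | ⟨⟨hU, h2, -⟩, hne⟩
    · obtain ⟨h2', e2⟩ := h₂ X hU h2
      exact ⟨hU, ht₁ X hU, h2', by rwa [h₁ X hU h1, e2]⟩
    · obtain ⟨h2', e2⟩ := h₂ X hU h2
      exact ⟨hU, ht₁ X hU, h2', by rwa [e2]⟩
  · rw [disjoint_left]
    intro X h h'
    simp only [mem_filter] at h h'
    exact h'.1.2.2 h.2.1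

theorem exists_forall_add_two_thirds_le {ι : Type*} [Fintype ι] [Nonempty ι] (T₁ T₂ : β)
    (ref : ι → β) (hres : ∀ i, ∀ X ∈ U, res (ref i) X)
    (hpres : ∀ i, ∀ X ∈ U, res T₁ X → rst (ref i) X = rst T₁ X)
    (hcount : ∀ X ∈ U.filter (fun X => res T₂ X ∧ ¬ res T₁ X),
      3 * #(univ.filter fun i => rst (ref i) X = rst T₂ X) ≤ Fintype.card ι) :
    ∃ i, ∀ t₂ : β, (∀ X ∈ U, res T₂ X → res t₂ X ∧ rst t₂ X = rst T₂ X) →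
      (#(U.filter fun X => res T₁ X ∧ res T₂ X ∧ rst T₁ X ≠ rst T₂ X) : ℝ) +
          2 / 3 * #(U.filter fun X => res T₂ X ∧ ¬ res T₁ X) ≤
        #(U.filter fun X => res (ref i) X ∧ res t₂ X ∧ rst (ref i) X ≠ rst t₂ X) := by
  set R := U.filter fun X => res T₂ X ∧ ¬ res T₁ X
  obtain ⟨i, hi⟩ := exists_mul_card_filter_le R (fun i X => rst (ref i) X = rst T₂ X) 3 hcount
  refine ⟨i, fun t₂ h₂ => ?_⟩
  have hD := card_add_card_filter_le_card U res rst (hres i) (hpres i) h₂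
  have hR := card_filter_add_card_filter_not (s := R) fun X => rst (ref i) X = rst T₂ X
  have hi' : (3 * #(R.filter fun X => rst (ref i) X = rst T₂ X) : ℝ) ≤ #R := by
    exact_mod_cast hi
  have hD' := (Nat.cast_le (α := ℝ)).2 hD
  have hR' := congrArg (Nat.cast (R := ℝ)) hR
  push_cast at hD' hR'
  simp only [ne_eq] at hD' hR' ⊢
  linarith

end Abstract

theorem le_iSup_iInf_of_exists {β : Type*} [Finite β] {A B : Set β} [Nonempty B]
    {f : β → β → ℝ} {c : ℝ} (h : ∃ a ∈ A, ∀ b ∈ B, c ≤ f a b) :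
    c ≤ ⨆ a : A, ⨅ b : B, f a b := by
  obtain ⟨a, ha, hab⟩ := h
  exact le_ciSup_of_le (Set.finite_range _).bddAbove ⟨a, ha⟩ (le_ciInf fun b => hab b b.2)

theorem add_mul_max_le_max {a k x y s t : ℝ} (hx : a + k * x ≤ t) (hy : a + k * y ≤ s) :
    a + k * max x y ≤ max s t := by
  rcases max_choice x y with h | h <;> rw [h]
  · exact le_max_of_le_right hx
  · exact le_max_of_le_left hy

section FinsetLemmas

variable {α : Type*} [DecidableEq α]

theorem card_inter_add_card_inter_le {C D X : Finset α} (h : C ∩ D = ∅) :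
    #(C ∩ X) + #(D ∩ X) ≤ #X := by
  rw [← card_union_of_disjoint
    ((disjoint_iff_inter_eq_empty.2 h).mono inter_subset_left inter_subset_left)]
  exact card_le_card (union_subset inter_subset_right inter_subset_right)

theorem univ_sdiff_inter [Fintype α] (A X : Finset α) : (univ \ A) ∩ X = X \ (A ∩ X) := by
  grind

theorem eq_sdiff_of_disjoint {P Q X : Finset α} (hP : P ⊆ X) (hQ : Q ⊆ X) (hd : Disjoint P Q)
    (h : #X ≤ #P + #Q) : P = X \ Q :=
  eq_of_subset_of_card_le (subset_sdiff.2 ⟨hP, hd⟩) (by rw [card_sdiff_of_subset hQ]; omega)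

theorem eq_sdiff_of_union_eq {P Q X : Finset α} (hQ : Q ⊆ X) (hu : P ∪ Q = X)
    (h : #P + #Q ≤ #X) : P = X \ Q :=
  (eq_of_subset_of_card_le (by grind) (by rw [card_sdiff_of_subset hQ]; omega)).symm

theorem exists_side_subset {X Y P : Finset α} (hP : P ⊆ X) (hXY : #(X \ Y) = 1) :
    ∃ Q ⊆ Y, (Q = P ∨ Q = X \ P) ∧ ∀ S ⊆ Y, (S = P ∨ S = X \ P) → S = Q := by
  obtain ⟨d, hd⟩ := card_eq_one.1 hXY
  have hdX : d ∈ X := (mem_sdiff.1 (hd ▸ mem_singleton_self d)).1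
  have hdY : d ∉ Y := (mem_sdiff.1 (hd ▸ mem_singleton_self d)).2
  have hY : ∀ x ∈ X, x ≠ d → x ∈ Y := fun x hx hxd => by
    by_contra hxY
    exact hxd (mem_singleton.1 (hd ▸ mem_sdiff.2 ⟨hx, hxY⟩))
  by_cases hdP : d ∈ P
  · refine ⟨X \ P, fun x hx => hY x (mem_sdiff.1 hx).1 ?_, Or.inr rfl, ?_⟩
    · rintro rfl
      exact (mem_sdiff.1 hx).2 hdP
    · rintro S hS (rfl | rfl)
      · exact absurd (hS hdP) hdY
      · rfl
  · refine ⟨P, fun x hx => hY x (hP hx) fun hxd => hdP (hxd ▸ hx), Or.inl rfl, ?_⟩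
    rintro S hS (rfl | rfl)
    · rfl
    · exact absurd (hS (mem_sdiff.2 ⟨hdX, hdP⟩)) hdY

def NestedOrDisjoint (A B : Finset α) : Prop :=
  A ⊆ B ∨ B ⊆ A ∨ A ∩ B = ∅

theorem NestedOrDisjoint.symm {A B : Finset α} (h : NestedOrDisjoint A B) :
    NestedOrDisjoint B A := by
  rcases h with h | h | h
  · exact Or.inr (Or.inl h)
  · exact Or.inl h
  · exact Or.inr (Or.inr (by rwa [inter_comm]))

variable [Fintype α]

def Compatible (A B : Finset α) : Prop :=
  A ⊆ B ∨ B ⊆ A ∨ A ∩ B = ∅ ∨ A ∪ B = univ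

theorem NestedOrDisjoint.compatible {A B : Finset α} (h : NestedOrDisjoint A B) :
    Compatible A B :=
  h.imp_right (Or.imp_right Or.inl)

theorem Compatible.symm {A B : Finset α} (h : Compatible A B) : Compatible B A := by
  unfold Compatible at h ⊢
  rw [inter_comm, union_comm]
  tauto

theorem Compatible.univ_sdiff_left {A B : Finset α} (h : Compatible A B) :
    Compatible (univ \ A) B := by
  rcases h with h | h | h | h
  · exact Or.inr (Or.inr (Or.inr (by grind)))
  · exact Or.inr (Or.inr (Or.inl (by grind)))
  · exact Or.inr (Or.inl (subset_sdiff.2 ⟨subset_univ B, (disjoint_iff_inter_eq_empty.2 h).symm⟩))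
  · exact Or.inl (by grind)

end FinsetLemmas

/-! ### Counting permutations -/

section PermCount

open Equiv

variable {n : ℕ}

theorem card_filter_mul_right (σ : Perm (Fin n)) (p : Perm (Fin n) → Prop) [DecidablePred p] :
    #(univ.filter fun π => p (π * σ)) = #(univ.filter p) :=
  card_equiv (Equiv.mulRight σ) (by simp)

theorem three_mul_card_filter_le (p : Perm (Fin n) → Prop) [DecidablePred p]
    (σ τ : Perm (Fin n)) (hσ : ∀ π, p π → ¬ p (π * σ)) (hτ : ∀ π, p π → ¬ p (π * τ))
    (hστ : ∀ π, p (π * σ) → ¬ p (π * τ)) :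
    3 * #(univ.filter p) ≤ Fintype.card (Perm (Fin n)) := by
  have h := card_le_univ
    ((univ.filter p ∪ univ.filter fun π => p (π * σ)) ∪ univ.filter fun π => p (π * τ))
  rw [card_union_of_disjoint, card_union_of_disjoint, card_filter_mul_right,
    card_filter_mul_right] at h
  · omega
  · exact disjoint_filter.2 fun π _ => hσ π
  · exact disjoint_union_left.2
      ⟨disjoint_filter.2 fun π _ => hτ π, disjoint_filter.2 fun π _ => hστ π⟩

theorem three_mul_card_lt_and_lt_le {a b c : Fin n} (hab : a ≠ b) (hac : a ≠ c)
    (hbc : b ≠ c) :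
    3 * #(univ.filter fun π : Perm (Fin n) => π a < π b ∧ π a < π c) ≤
      Fintype.card (Perm (Fin n)) := by
  apply three_mul_card_filter_le _ (swap a b) (swap a c) <;> intro π <;>
    simp only [Perm.mul_apply, swap_apply_left, swap_apply_right,
      swap_apply_of_ne_of_ne hac.symm hbc.symm, swap_apply_of_ne_of_ne hab.symm hbc] <;>
    omega

def Separates (π : Perm (Fin n)) (a b c d : Fin n) : Prop :=
  max (π a) (π b) < min (π c) (π d) ∨ max (π c) (π d) < min (π a) (π b)

theorem three_mul_card_separates_le {a b c d : Fin n} (hab : a ≠ b) (hac : a ≠ c)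
    (had : a ≠ d) (hbc : b ≠ c) (hbd : b ≠ d) (hcd : c ≠ d) :
    3 * #(univ.filter fun π => Separates π a b c d) ≤ Fintype.card (Perm (Fin n)) := by
  have hinj : ∀ π : Perm (Fin n), π a ≠ π b ∧ π a ≠ π c ∧ π a ≠ π d ∧ π b ≠ π c ∧
      π b ≠ π d ∧ π c ≠ π d := fun π => by simp [hab, hac, had, hbc, hbd, hcd]
  apply three_mul_card_filter_le _ (swap b c) (swap b d) <;> intro π <;>
    simp only [Separates, Perm.mul_apply, swap_apply_left, swap_apply_right,
      swap_apply_of_ne_of_ne hab hac, swap_apply_of_ne_of_ne hab had,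
      swap_apply_of_ne_of_ne hbd.symm hcd.symm, swap_apply_of_ne_of_ne hbc.symm hcd] <;>
    have := hinj π <;>
    simp only [Fin.lt_def, Fin.coe_max, Fin.coe_min, ne_eq, ← Fin.val_inj] at * <;>
    omega

end PermCount

/-! ### Caterpillar refinements of rooted trees -/

theorem mem_famRestrict {n : ℕ} {F : Finset (Finset (Fin n))} {X S : Finset (Fin n)} :
    S ∈ famRestrict F X ↔ (∃ C ∈ F, C ∩ X = S) ∧ S ≠ ∅ := by
  simp [famRestrict]

theorem mem_triplets {n : ℕ} {X : Finset (Fin n)} : X ∈ triplets n ↔ #X = 3 := by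
  simp [triplets]

namespace RTree

open Equiv

variable {n : ℕ}

theorem inter_eq_of_card_eq_two (T : RTree n) {X C D : Finset (Fin n)} (hX : #X = 3)
    (hC : C ∈ T.clusters) (hD : D ∈ T.clusters) (h2C : #(C ∩ X) = 2)
    (h2D : #(D ∩ X) = 2) : C ∩ X = D ∩ X := by
  rcases T.laminar C hC D hD with h | h | h
  · exact eq_of_subset_of_card_le (inter_subset_inter_right h) (by omega)
  · exact (eq_of_subset_of_card_le (inter_subset_inter_right h) (by omega)).symm
  · have := card_inter_add_card_inter_le (X := X) h
    omega

theorem mem_famRestrict_iff (T : RTree n) {X C S : Finset (Fin n)} (hX : #X = 3)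
    (hC : C ∈ T.clusters) (h2C : #(C ∩ X) = 2) :
    S ∈ famRestrict T.clusters X ↔ S ⊆ X ∧ S ≠ ∅ ∧ (#S = 2 → S = C ∩ X) := by
  rw [mem_famRestrict]
  constructor
  · rintro ⟨⟨D, hD, rfl⟩, hne⟩
    exact ⟨inter_subset_right, hne, fun h2 => T.inter_eq_of_card_eq_two hX hD hC h2 h2C⟩
  · rintro ⟨hsub, hne, h2⟩
    refine ⟨?_, hne⟩
    have hpos : 0 < #S := card_pos.2 (nonempty_of_ne_empty hne)
    have hle : #S ≤ 3 := hX ▸ card_le_card hsub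
    interval_cases h : #S
    · obtain ⟨x, rfl⟩ := card_eq_one.1 h
      exact ⟨{x}, T.singleton_mem x, inter_eq_left.2 hsub⟩
    · exact ⟨C, hC, (h2 rfl).symm⟩
    · exact ⟨univ, T.univ_mem, by rw [univ_inter, eq_of_subset_of_card_le hsub (by omega)]⟩

theorem famRestrict_eq_of_subset {T T' : RTree n} (h : T.clusters ⊆ T'.clusters)
    {X : Finset (Fin n)} (hX : #X = 3) (hres : famResolved T.clusters X) :
    famRestrict T'.clusters X = famRestrict T.clusters X := by
  obtain ⟨C, hC, h2C⟩ := hres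
  ext S
  rw [T'.mem_famRestrict_iff hX (h hC) h2C, T.mem_famRestrict_iff hX hC h2C]

theorem inter_eq_of_famRestrict_eq {T T' : RTree n} {X C D : Finset (Fin n)} (hX : #X = 3)
    (hC : C ∈ T.clusters) (h2C : #(C ∩ X) = 2) (hD : D ∈ T'.clusters) (h2D : #(D ∩ X) = 2)
    (h : famRestrict T.clusters X = famRestrict T'.clusters X) : C ∩ X = D ∩ X := by
  have hmem : C ∩ X ∈ famRestrict T.clusters X :=
    mem_famRestrict.2 ⟨⟨C, hC, rfl⟩, fun he => by simp [he] at h2C⟩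
  rw [h, T'.mem_famRestrict_iff hX hD h2D] at hmem
  exact hmem.2.2 h2C

section Child

variable (T : RTree n)

/-- By laminarity the clusters strictly inside `C` containing `y` form a chain, so for
`y ∈ C` this is the child of `C` containing `y`. -/
noncomputable def child (C : Finset (Fin n)) (y : Fin n) : Finset (Fin n) :=
  insert y ((T.clusters.filter fun D => y ∈ D ∧ D ⊂ C).biUnion id)

noncomputable def rep (C : Finset (Fin n)) (y : Fin n) : Fin n :=
  (T.child C y).min' (insert_nonempty _ _)

noncomputable def suffix (π : Perm (Fin n)) (C : Finset (Fin n)) (t : Fin n) :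
    Finset (Fin n) :=
  C.filter fun y => π (T.rep C t) ≤ π (T.rep C y)

variable {T} {C D X : Finset (Fin n)} {y z : Fin n}

theorem mem_child : z ∈ T.child C y ↔ z = y ∨ ∃ D ∈ T.clusters, y ∈ D ∧ D ⊂ C ∧ z ∈ D := by
  simp [child, and_assoc]

theorem mem_child_self : y ∈ T.child C y := mem_insert_self _ _

theorem subset_child (hD : D ∈ T.clusters) (hy : y ∈ D) (hDC : D ⊂ C) : D ⊆ T.child C y :=
  fun _ hz => mem_child.2 (Or.inr ⟨D, hD, hy, hDC, hz⟩)

theorem child_subset_child (hz : z ∈ T.child C y) : T.child C z ⊆ T.child C y := by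
  intro w hw
  rcases mem_child.1 hw with rfl | ⟨E, hE, hzE, hEC, hwE⟩
  · exact hz
  rcases mem_child.1 hz with rfl | ⟨D, hD, hyD, hDC, hzD⟩
  · exact subset_child hE hzE hEC hwE
  rcases T.laminar D hD E hE with h | h | h
  · exact subset_child hE (h hyD) hEC hwE
  · exact subset_child hD hyD hDC (h hwE)
  · exact absurd (mem_inter.2 ⟨hzD, hzE⟩) (by simp [h])

theorem child_eq_of_mem (hz : z ∈ T.child C y) : T.child C z = T.child C y := by
  refine (child_subset_child hz).antisymm (child_subset_child ?_)
  rcases mem_child.1 hz with rfl | ⟨D, hD, hyD, hDC, hzD⟩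
  · exact mem_child_self
  · exact subset_child hD hzD hDC hyD

theorem rep_mem_child : T.rep C y ∈ T.child C y := min'_mem _ _

theorem rep_eq_of_mem (hz : z ∈ T.child C y) : T.rep C z = T.rep C y := by
  simp only [rep, child_eq_of_mem hz]

theorem rep_eq_of_mem_cluster (hD : D ∈ T.clusters) (hDC : D ⊂ C) (hy : y ∈ D)
    (hz : z ∈ D) : T.rep C z = T.rep C y :=
  rep_eq_of_mem (subset_child hD hy hDC hz)

theorem rep_injOn (hmin : ∀ D ∈ T.clusters, D ⊂ C → #(D ∩ X) ≤ 1) :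
    Set.InjOn (T.rep C) X := by
  intro y hy z hz h
  rw [mem_coe] at hy hz
  by_contra hyz
  have hzy : z ∈ T.child C y := by
    rw [← child_eq_of_mem (rep_mem_child (y := y)), h, child_eq_of_mem rep_mem_child]
    exact mem_child_self
  rcases mem_child.1 hzy with rfl | ⟨D, hD, hyD, hDC, hzD⟩
  · exact hyz rfl
  · have h2 := card_le_card (show {y, z} ⊆ D ∩ X by
      simp [insert_subset_iff, hy, hz, hyD, hzD])
    rw [card_pair hyz] at h2
    have := hmin D hD hDC
    omega

variable {π : Perm (Fin n)} {t t' : Fin n}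

theorem suffix_subset : T.suffix π C t ⊆ C := filter_subset _ _

theorem mem_suffix : y ∈ T.suffix π C t ↔ y ∈ C ∧ π (T.rep C t) ≤ π (T.rep C y) :=
  mem_filter

theorem mem_suffix_self (ht : t ∈ C) : t ∈ T.suffix π C t := mem_suffix.2 ⟨ht, le_rfl⟩

theorem subset_suffix_or_inter_eq_empty (hD : D ∈ T.clusters) (hDC : D ⊂ C) :
    D ⊆ T.suffix π C t ∨ D ∩ T.suffix π C t = ∅ := by
  by_cases h : ∃ w ∈ D, π (T.rep C t) ≤ π (T.rep C w)
  · obtain ⟨w, hw, hle⟩ := h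
    exact Or.inl fun z hz =>
      mem_suffix.2 ⟨hDC.subset hz, (rep_eq_of_mem_cluster hD hDC hw hz).symm ▸ hle⟩
  · push Not at h
    refine Or.inr (eq_empty_of_forall_notMem fun z hz => ?_)
    obtain ⟨hzD, hzS⟩ := mem_inter.1 hz
    exact (h z hzD).not_ge (mem_suffix.1 hzS).2

theorem nestedOrDisjoint_suffix_suffix (C : Finset (Fin n)) (t t' : Fin n) :
    NestedOrDisjoint (T.suffix π C t) (T.suffix π C t') := by
  rcases le_total (π (T.rep C t)) (π (T.rep C t')) with h | h
  · exact Or.inr (Or.inl fun y hy =>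
      mem_suffix.2 ⟨suffix_subset hy, h.trans (mem_suffix.1 hy).2⟩)
  · exact Or.inl fun y hy => mem_suffix.2 ⟨suffix_subset hy, h.trans (mem_suffix.1 hy).2⟩

theorem nestedOrDisjoint_cluster_suffix (hD : D ∈ T.clusters) (hC : C ∈ T.clusters) :
    NestedOrDisjoint D (T.suffix π C t) := by
  rcases T.laminar D hD C hC with h | h | h
  · rcases h.eq_or_ssubset with rfl | hDC
    · exact Or.inr (Or.inl suffix_subset)
    · exact (subset_suffix_or_inter_eq_empty hD hDC).imp_right Or.inr
  · exact Or.inr (Or.inl (suffix_subset.trans h))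
  · exact Or.inr (Or.inr (subset_empty.1 (h ▸ inter_subset_inter_left suffix_subset)))

theorem nestedOrDisjoint_suffix_of_subset (hC : C ∈ T.clusters) (hCD : C ⊆ D) :
    NestedOrDisjoint (T.suffix π C t) (T.suffix π D t') := by
  rcases hCD.eq_or_ssubset with rfl | hCD
  · exact nestedOrDisjoint_suffix_suffix C t t'
  · rcases subset_suffix_or_inter_eq_empty (π := π) (t := t') hC hCD with h | h
    · exact Or.inl (suffix_subset.trans h)
    · exact Or.inr (Or.inr (subset_empty.1 (h ▸ inter_subset_inter_right suffix_subset)))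

end Child

section Caterpillar

variable (T : RTree n) (π : Perm (Fin n))

/-- Every cluster `C` gets a caterpillar on its children, ordered by `π` of their
representatives: the new clusters are the suffixes of that order. -/
noncomputable def caterpillarClusters : Finset (Finset (Fin n)) :=
  T.clusters ∪ T.clusters.biUnion fun C => C.image (T.suffix π C)

variable {T π} {S : Finset (Fin n)}

theorem mem_caterpillarClusters :
    S ∈ T.caterpillarClusters π ↔
      S ∈ T.clusters ∨ ∃ C ∈ T.clusters, ∃ t ∈ C, T.suffix π C t = S := by
  simp [caterpillarClusters]

theorem caterpillarClusters_laminar (A : Finset (Fin n)) (hA : A ∈ T.caterpillarClusters π)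
    (B : Finset (Fin n)) (hB : B ∈ T.caterpillarClusters π) : NestedOrDisjoint A B := by
  rcases mem_caterpillarClusters.1 hA with hA | ⟨C, hC, t, -, rfl⟩ <;>
    rcases mem_caterpillarClusters.1 hB with hB | ⟨D, hD, t', -, rfl⟩
  · exact T.laminar A hA B hB
  · exact nestedOrDisjoint_cluster_suffix hA hD
  · exact (nestedOrDisjoint_cluster_suffix hB hC).symm
  · rcases T.laminar C hC D hD with h | h | h
    · exact nestedOrDisjoint_suffix_of_subset hC h
    · exact (nestedOrDisjoint_suffix_of_subset hD h).symm
    · exact Or.inr (Or.inr (subset_empty.1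
        (h ▸ inter_subset_inter suffix_subset suffix_subset)))

variable (T π)

noncomputable def caterpillar : RTree n where
  clusters := T.caterpillarClusters π
  univ_mem := subset_union_left T.univ_mem
  singleton_mem x := subset_union_left (T.singleton_mem x)
  empty_not_mem h := by
    rcases mem_caterpillarClusters.1 h with h | ⟨C, -, t, ht, he⟩
    · exact T.empty_not_mem h
    · exact notMem_empty t (he ▸ mem_suffix_self ht)
  laminar := caterpillarClusters_laminar

theorem clusters_subset_caterpillar : T.clusters ⊆ (T.caterpillar π).clusters :=
  subset_union_left

theorem suffix_mem_caterpillar {C : Finset (Fin n)} (hC : C ∈ T.clusters) {t : Fin n}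
    (ht : t ∈ C) : T.suffix π C t ∈ (T.caterpillar π).clusters :=
  mem_caterpillarClusters.2 (Or.inr ⟨C, hC, t, ht, rfl⟩)

end Caterpillar

section Resolution

variable {T : RTree n} {X C Q : Finset (Fin n)} {π : Perm (Fin n)}

theorem exists_minimal_cluster (T : RTree n) (hX : 2 ≤ #X) :
    ∃ C ∈ T.clusters, 2 ≤ #(C ∩ X) ∧ ∀ D ∈ T.clusters, D ⊂ C → #(D ∩ X) ≤ 1 := by
  obtain ⟨C, ⟨hC, h2⟩, hmin⟩ := exists_minimal_of_wellFoundedLT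
    (fun C => C ∈ T.clusters ∧ 2 ≤ #(C ∩ X)) ⟨univ, T.univ_mem, by rwa [univ_inter]⟩
  refine ⟨C, hC, h2, fun D hD hDC => ?_⟩
  by_contra! h
  exact hDC.2 (hmin ⟨hD, h⟩ hDC.1)

theorem three_le_card_inter (hunres : ¬ famResolved T.clusters X) (hC : C ∈ T.clusters)
    (h2 : 2 ≤ #(C ∩ X)) : 3 ≤ #(C ∩ X) := by
  by_contra! h
  exact hunres ⟨C, hC, by omega⟩

/-- The suffix from the second smallest key separates the element of smallest key. -/
theorem caterpillar_resolves (T : RTree n) (π : Perm (Fin n)) (hX : #X = 3) :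
    famResolved (T.caterpillar π).clusters X := by
  by_cases hres : famResolved T.clusters X
  · obtain ⟨C, hC, h2⟩ := hres
    exact ⟨C, T.clusters_subset_caterpillar π hC, h2⟩
  obtain ⟨C, hC, h2C, hmin⟩ := T.exists_minimal_cluster (X := X) (by omega)
  have hXC : X ⊆ C := by
    have h3 := three_le_card_inter hres hC h2C
    rw [← eq_of_subset_of_card_le inter_subset_right (by omega : #X ≤ #(C ∩ X))]
    exact inter_subset_left
  set key := fun y => π (T.rep C y)
  have hinj : Set.InjOn key X := π.injective.comp_injOn (rep_injOn hmin)
  obtain ⟨x, hx, hxmin⟩ := exists_min_image X key (card_pos.1 (by omega))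
  have hne : (X.erase x).Nonempty := card_pos.1 (by rw [card_erase_of_mem hx]; omega)
  obtain ⟨m, hm, hmmin⟩ := exists_min_image (X.erase x) key hne
  obtain ⟨hmx, hmX⟩ := mem_erase.1 hm
  refine ⟨T.suffix π C m, T.suffix_mem_caterpillar π hC (hXC hmX), ?_⟩
  have : T.suffix π C m ∩ X = X.erase x := by
    ext y
    simp only [mem_inter, mem_suffix, mem_erase]
    constructor
    · rintro ⟨⟨-, hle⟩, hy⟩
      refine ⟨fun hyx => ?_, hy⟩
      subst hyx
      exact hmx (hinj hmX hy (le_antisymm hle (hxmin m hmX)))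
    · rintro ⟨hyx, hy⟩
      exact ⟨⟨hXC hy, hmmin y (mem_erase.2 ⟨hyx, hy⟩)⟩, hy⟩
  rw [this, card_erase_of_mem hx, hX]

theorem caterpillar_fullyResolved (T : RTree n) (π : Perm (Fin n)) :
    (T.caterpillar π).FullyResolved := fun _ hX =>
  T.caterpillar_resolves π (mem_triplets.1 hX)

theorem caterpillar_mem_fullRef (T : RTree n) (π : Perm (Fin n)) :
    T.caterpillar π ∈ T.FullRef :=
  ⟨T.caterpillar_fullyResolved π, T.clusters_subset_caterpillar π⟩

/-- Otherwise some triplet inside `C ∩ X` would be unresolved. -/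
theorem card_inter_eq_two_of_fullyResolved (hT : T.FullyResolved) (hC : C ∈ T.clusters)
    (h2 : 2 ≤ #(C ∩ X)) (hmin : ∀ D ∈ T.clusters, D ⊂ C → #(D ∩ X) ≤ 1) :
    #(C ∩ X) = 2 := by
  by_contra hne
  obtain ⟨Y, hY, hY3⟩ := exists_subset_card_eq (show 3 ≤ #(C ∩ X) by omega)
  obtain ⟨D, hD, h2D⟩ := hT Y (mem_triplets.2 hY3)
  have hYC : Y ⊆ C := hY.trans inter_subset_left
  rcases T.laminar D hD C hC with h | h | h
  · rcases h.eq_or_ssubset with rfl | hDC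
    · rw [inter_eq_right.2 hYC] at h2D
      omega
    · have := card_le_card (inter_subset_inter_left (s := D) (hY.trans inter_subset_right))
      have := hmin D hD hDC
      omega
  · rw [inter_eq_right.2 (hYC.trans h)] at h2D
    omega
  · have := card_le_card (inter_subset_inter_left (s := D) hYC)
    rw [h, card_empty] at this
    omega

/-- `S` is not a cluster of `T`, and a suffix at a cluster above `C` contains all or none of
the at least three points of `C ∩ X`. -/
theorem eq_suffix_of_mem_caterpillar (hX : #X ≤ 4) (hunres : ¬ famResolved T.clusters X)
    (hC : C ∈ T.clusters) (h2C : 2 ≤ #(C ∩ X))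
    (hmin : ∀ D ∈ T.clusters, D ⊂ C → #(D ∩ X) ≤ 1) {S : Finset (Fin n)}
    (hS : S ∈ (T.caterpillar π).clusters) (hS2 : #(S ∩ X) = 2) :
    ∃ t, S = T.suffix π C t := by
  rcases mem_caterpillarClusters.1 hS with hS | ⟨C', hC', t, -, rfl⟩
  · exact absurd ⟨S, hS, hS2⟩ hunres
  refine ⟨t, ?_⟩
  suffices C' = C by rw [this]
  have h3C := three_le_card_inter hunres hC h2C
  have h3C' := three_le_card_inter hunres hC'
    (hS2 ▸ card_le_card (inter_subset_inter_right suffix_subset))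
  rcases T.laminar C' hC' C hC with h | h | h
  · rcases h.eq_or_ssubset with rfl | h
    · rfl
    · have := hmin C' hC' h
      omega
  · rcases h.eq_or_ssubset with rfl | h
    · rfl
    rcases subset_suffix_or_inter_eq_empty (π := π) (t := t) hC h with h' | h'
    · have := card_le_card (inter_subset_inter_right (u := X) h')
      omega
    · have := card_inter_add_card_inter_le (X := X) h'
      omega
  · have := card_inter_add_card_inter_le (X := X) h
    omega

theorem rep_lt_of_suffix_inter_eq {t a b : Fin n} (h : T.suffix π C t ∩ X = Q)
    (ha : a ∈ C ∩ X) (haQ : a ∉ Q) (hb : b ∈ Q) : π (T.rep C a) < π (T.rep C b) := by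
  rw [← h, mem_inter, mem_suffix] at hb haQ
  obtain ⟨haC, haX⟩ := mem_inter.1 ha
  exact (not_le.1 fun hle => haQ ⟨⟨haC, hle⟩, haX⟩).trans_le hb.1.2

theorem max_lt_min_of_suffix_inter_eq {t a a' b b' : Fin n}
    (h : T.suffix π C t ∩ X = {b, b'}) (ha : a ∈ C ∩ X) (ha' : a' ∈ C ∩ X)
    (haB : a ∉ ({b, b'} : Finset (Fin n))) (ha'B : a' ∉ ({b, b'} : Finset (Fin n))) :
    max (π (T.rep C a)) (π (T.rep C a')) < min (π (T.rep C b)) (π (T.rep C b')) :=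
  max_lt (lt_min (rep_lt_of_suffix_inter_eq h ha haB (by simp))
      (rep_lt_of_suffix_inter_eq h ha haB (by simp)))
    (lt_min (rep_lt_of_suffix_inter_eq h ha' ha'B (by simp))
      (rep_lt_of_suffix_inter_eq h ha' ha'B (by simp)))

theorem three_mul_card_exists_suffix_inter_eq_le
    (hmin : ∀ D ∈ T.clusters, D ⊂ C → #(D ∩ X) ≤ 1) (hQ : Q ⊆ C ∩ X) (hQ2 : #Q = 2)
    (h3 : #(C ∩ X) = 3) :
    3 * #(univ.filter fun π => ∃ t, T.suffix π C t ∩ X = Q) ≤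
      Fintype.card (Perm (Fin n)) := by
  obtain ⟨e, he⟩ := card_eq_one.1
    (show #((C ∩ X) \ Q) = 1 by rw [card_sdiff_of_subset hQ]; omega)
  obtain ⟨heCX, heQ⟩ := mem_sdiff.1 (he ▸ mem_singleton_self e)
  obtain ⟨u, v, huv, rfl⟩ := card_eq_two.1 hQ2
  have hu : u ∈ C ∩ X := hQ (by simp)
  have hv : v ∈ C ∩ X := hQ (by simp)
  have hinj := (rep_injOn hmin).mono (coe_subset.2 (inter_subset_right (s₁ := C)))
  refine (Nat.mul_le_mul_left 3 (card_le_card fun π hπ => ?_)).trans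
    (three_mul_card_lt_and_lt_le (hinj.ne heCX hu (by rintro rfl; simp at heQ))
      (hinj.ne heCX hv (by rintro rfl; simp at heQ)) (hinj.ne hu hv huv))
  obtain ⟨t, ht⟩ := (mem_filter.1 hπ).2
  exact mem_filter.2 ⟨mem_univ _, rep_lt_of_suffix_inter_eq ht heCX heQ (by simp),
    rep_lt_of_suffix_inter_eq ht heCX heQ (by simp)⟩

theorem three_mul_card_exists_suffix_inter_eq_or_le
    (hmin : ∀ D ∈ T.clusters, D ⊂ C → #(D ∩ X) ≤ 1) (hXC : X ⊆ C) (hX : #X = 4)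
    {P : Finset (Fin n)} (hP : P ⊆ X) (hP2 : #P = 2) :
    3 * #(univ.filter fun π => ∃ t, T.suffix π C t ∩ X = P ∨ T.suffix π C t ∩ X = X \ P) ≤
      Fintype.card (Perm (Fin n)) := by
  have hCX : ∀ {y}, y ∈ X → y ∈ C ∩ X := fun hy => mem_inter.2 ⟨hXC hy, hy⟩
  obtain ⟨q, q', hqq', hQ⟩ := card_eq_two.1
    (show #(X \ P) = 2 by rw [card_sdiff_of_subset hP]; omega)
  obtain ⟨p, p', hpp', rfl⟩ := card_eq_two.1 hP2
  have hp : p ∈ X := hP (by simp)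
  have hp' : p' ∈ X := hP (by simp)
  obtain ⟨hq, hqP⟩ := mem_sdiff.1 (hQ ▸ by simp : q ∈ X \ {p, p'})
  obtain ⟨hq', hq'P⟩ := mem_sdiff.1 (hQ ▸ by simp : q' ∈ X \ {p, p'})
  have hpQ : ∀ {a}, a ∈ ({p, p'} : Finset (Fin n)) → a ∉ ({q, q'} : Finset (Fin n)) :=
    fun ha => by rw [← hQ]; simp [ha]
  have hne : ∀ {a}, a ∉ ({p, p'} : Finset (Fin n)) → a ≠ p ∧ a ≠ p' := fun h => by
    simpa [not_or] using h
  have hinj := rep_injOn (T := T) hmin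
  refine (Nat.mul_le_mul_left 3 (card_le_card fun π hπ => ?_)).trans
    (three_mul_card_separates_le (hinj.ne hq hq' hqq') (hinj.ne hq hp (hne hqP).1)
      (hinj.ne hq hp' (hne hqP).2) (hinj.ne hq' hp (hne hq'P).1)
      (hinj.ne hq' hp' (hne hq'P).2) (hinj.ne hp hp' hpp'))
  obtain ⟨t, ht | ht⟩ := (mem_filter.1 hπ).2 <;> refine mem_filter.2 ⟨mem_univ _, ?_⟩
  · exact Or.inl (max_lt_min_of_suffix_inter_eq ht (hCX hq) (hCX hq') hqP hq'P)
  · rw [hQ] at ht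
    exact Or.inr (max_lt_min_of_suffix_inter_eq ht (hCX hp) (hCX hp') (hpQ (by simp))
      (hpQ (by simp)))

end Resolution

theorem three_mul_card_famRestrict_caterpillar_eq_le {T₁ T₂ : RTree n} {X : Finset (Fin n)}
    (hX : X ∈ (triplets n).filter
      fun X => famResolved T₂.clusters X ∧ ¬ famResolved T₁.clusters X) :
    3 * #(univ.filter fun π =>
        famRestrict (T₁.caterpillar π).clusters X = famRestrict T₂.clusters X) ≤
      Fintype.card (Perm (Fin n)) := by
  obtain ⟨hX3, ⟨D, hD, h2D⟩, hunres⟩ := mem_filter.1 hX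
  rw [mem_triplets] at hX3
  obtain ⟨C, hC, h2C, hmin⟩ := T₁.exists_minimal_cluster (X := X) (by omega)
  have hCX : #(C ∩ X) = 3 :=
    le_antisymm (hX3 ▸ card_le_card inter_subset_right) (three_le_card_inter hunres hC h2C)
  have hDX : D ∩ X ⊆ C ∩ X := by
    rw [eq_of_subset_of_card_le inter_subset_right (hX3.trans hCX.symm).le]
    exact inter_subset_right
  refine (Nat.mul_le_mul_left 3 (card_le_card fun π hπ => ?_)).trans
    (three_mul_card_exists_suffix_inter_eq_le hmin hDX h2D hCX)
  obtain ⟨S, hS, hS2⟩ := T₁.caterpillar_resolves π hX3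
  obtain ⟨t, rfl⟩ := eq_suffix_of_mem_caterpillar (by omega) hunres hC h2C hmin hS hS2
  exact mem_filter.2
    ⟨mem_univ _, t, inter_eq_of_famRestrict_eq hX3 hS hS2 hD h2D (mem_filter.1 hπ).2⟩

theorem add_two_thirds_card_setR2_le (T₁ T₂ : RTree n) :
    (#(setD T₁ T₂) : ℝ) + 2 / 3 * #(setR2 T₁ T₂) ≤
      ⨆ t₁ : T₁.FullRef, ⨅ t₂ : T₂.FullRef, tripletDist t₁.1 t₂.1 := by
  obtain ⟨π, hπ⟩ := exists_forall_add_two_thirds_le (triplets n)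
    (fun T X => famResolved (clusters T) X) (fun T X => famRestrict (clusters T) X) T₁ T₂
    T₁.caterpillar (fun π _ hX => T₁.caterpillar_resolves π (mem_triplets.1 hX))
    (fun π _ hX h => famRestrict_eq_of_subset (T₁.clusters_subset_caterpillar π)
      (mem_triplets.1 hX) h)
    fun _ hX => three_mul_card_famRestrict_caterpillar_eq_le hX
  have : Nonempty T₂.FullRef := ⟨⟨_, T₂.caterpillar_mem_fullRef 1⟩⟩
  exact le_iSup_iInf_of_exists ⟨_, T₁.caterpillar_mem_fullRef π, fun t₂ ht₂ =>
    hπ t₂ fun X hX h => ⟨ht₂.1 X hX, famRestrict_eq_of_subset ht₂.2 (mem_triplets.1 hX) h⟩⟩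

theorem setD_comm (T₁ T₂ : RTree n) : setD T₁ T₂ = setD T₂ T₁ := by
  ext X
  simp only [setD, famSetD, mem_filter]
  tauto

theorem tripletDist_comm (t₁ t₂ : RTree n) : tripletDist t₁ t₂ = tripletDist t₂ t₁ := by
  rw [tripletDist, tripletDist, setD_comm]

theorem add_two_thirds_max_le_dHaus (T₁ T₂ : RTree n) :
    (#(setD T₁ T₂) : ℝ) + 2 / 3 * max (#(setR1 T₁ T₂) : ℝ) #(setR2 T₁ T₂) ≤
      dHaus T₁ T₂ := by
  have h := add_two_thirds_card_setR2_le T₂ T₁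
  rw [setD_comm] at h
  exact add_mul_max_le_max
    (h.trans_eq (iSup_congr fun _ => iInf_congr fun _ => tripletDist_comm _ _))
    (add_two_thirds_card_setR2_le T₁ T₂)

end RTree

/-! ### Unrooted trees -/

theorem mem_famRestrictU {n : ℕ} {F : Finset (Finset (Fin n))} {X S : Finset (Fin n)} :
    S ∈ famRestrictU F X ↔ (∃ A ∈ F, A ∩ X = S) ∧ S ≠ ∅ ∧ S ≠ X := by
  simp [famRestrictU]

theorem mem_quartets {n : ℕ} {X : Finset (Fin n)} : X ∈ quartets n ↔ #X = 4 := by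
  simp [quartets]

namespace UTree

variable {n : ℕ} {X A B S : Finset (Fin n)}

theorem singleton_mem (U : UTree n) (hn : 1 < n) (x : Fin n) : {x} ∈ U.splits :=
  (U.trivial_mem x).resolve_left fun h => by
    have := congrArg card h
    rw [card_singleton, card_univ, Fintype.card_fin] at this
    omega

theorem inter_eq_or_eq_sdiff (U : UTree n) (hX : #X = 4) (hA : A ∈ U.splits)
    (hB : B ∈ U.splits) (h2A : #(A ∩ X) = 2) (h2B : #(B ∩ X) = 2) :
    A ∩ X = B ∩ X ∨ A ∩ X = X \ (B ∩ X) := by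
  rcases U.compat A hA B hB with h | h | h | h
  · exact Or.inl (eq_of_subset_of_card_le (inter_subset_inter_right h) (by omega))
  · exact Or.inl (eq_of_subset_of_card_le (inter_subset_inter_right h) (by omega)).symm
  · exact Or.inr (eq_sdiff_of_disjoint inter_subset_right inter_subset_right
      ((disjoint_iff_inter_eq_empty.2 h).mono inter_subset_left inter_subset_left) (by omega))
  · exact Or.inr (eq_sdiff_of_union_eq inter_subset_right
      (by rw [← union_inter_distrib_right, h, univ_inter]) (by omega))

theorem mem_famRestrictU_iff (U : UTree n) (hX : #X = 4) (hA : A ∈ U.splits)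
    (h2A : #(A ∩ X) = 2) :
    S ∈ famRestrictU U.splits X ↔
      S ⊆ X ∧ S ≠ ∅ ∧ S ≠ X ∧ (#S = 2 → S = A ∩ X ∨ S = X \ (A ∩ X)) := by
  have hn : 1 < n := by
    have := card_le_univ X
    rw [Fintype.card_fin] at this
    omega
  rw [mem_famRestrictU]
  constructor
  · rintro ⟨⟨B, hB, rfl⟩, hne, hneX⟩
    exact ⟨inter_subset_right, hne, hneX, fun h2 => U.inter_eq_or_eq_sdiff hX hB hA h2 h2A⟩
  · rintro ⟨hsub, hne, hneX, h2⟩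
    refine ⟨?_, hne, hneX⟩
    have hpos : 0 < #S := card_pos.2 (nonempty_of_ne_empty hne)
    have hlt : #S < 4 := hX ▸ card_lt_card (Finset.ssubset_iff_subset_ne.2 ⟨hsub, hneX⟩)
    interval_cases h : #S
    · obtain ⟨x, rfl⟩ := card_eq_one.1 h
      exact ⟨{x}, U.singleton_mem hn x, inter_eq_left.2 hsub⟩
    · rcases h2 rfl with rfl | rfl
      · exact ⟨A, hA, rfl⟩
      · exact ⟨univ \ A, U.compl_mem A hA, univ_sdiff_inter A X⟩
    · obtain ⟨x, hx⟩ := card_eq_one.1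
        (show #(X \ S) = 1 by rw [card_sdiff_of_subset hsub]; omega)
      have hxX : {x} ⊆ X := hx ▸ sdiff_subset
      refine ⟨univ \ {x}, U.compl_mem _ (U.singleton_mem hn x), ?_⟩
      rw [univ_sdiff_inter, inter_eq_left.2 hxX, ← hx, Finset.sdiff_sdiff_eq_self hsub]

theorem famRestrictU_eq_of_subset {U U' : UTree n} (h : U.splits ⊆ U'.splits) (hX : #X = 4)
    (hres : famResolvedU U.splits X) : famRestrictU U'.splits X = famRestrictU U.splits X := by
  obtain ⟨A, hA, h2A⟩ := hres
  ext S
  rw [U'.mem_famRestrictU_iff hX (h hA) h2A, U.mem_famRestrictU_iff hX hA h2A]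

theorem inter_eq_or_of_famRestrictU_eq {U U' : UTree n} (hX : #X = 4) (hA : A ∈ U.splits)
    (h2A : #(A ∩ X) = 2) (hB : B ∈ U'.splits) (h2B : #(B ∩ X) = 2)
    (h : famRestrictU U.splits X = famRestrictU U'.splits X) :
    A ∩ X = B ∩ X ∨ A ∩ X = X \ (B ∩ X) := by
  have hmem : A ∩ X ∈ famRestrictU U.splits X :=
    mem_famRestrictU.2 ⟨⟨A, hA, rfl⟩, fun he => by simp [he] at h2A,
      fun he => by rw [he] at h2A; omega⟩
  rw [h, U'.mem_famRestrictU_iff hX hB h2B] at hmem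
  exact hmem.2.2.2 h2A

noncomputable def rootAtClusters (U : UTree n) (ρ : Fin n) : Finset (Finset (Fin n)) :=
  U.splits.filter (ρ ∉ ·) ∪ {univ, {ρ}}

theorem mem_rootAtClusters {U : UTree n} {ρ : Fin n} :
    A ∈ U.rootAtClusters ρ ↔ (A ∈ U.splits ∧ ρ ∉ A) ∨ A = univ ∨ A = {ρ} := by
  simp only [rootAtClusters, mem_union, mem_filter, mem_insert, mem_singleton]

noncomputable def rootAt (U : UTree n) (ρ : Fin n) : RTree n where
  clusters := U.rootAtClusters ρ
  univ_mem := mem_rootAtClusters.2 (Or.inr (Or.inl rfl))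
  singleton_mem x := by
    refine mem_rootAtClusters.2 ?_
    rcases eq_or_ne x ρ with rfl | hx
    · exact Or.inr (Or.inr rfl)
    rcases U.trivial_mem x with h | h
    · exact Or.inr (Or.inl h)
    · exact Or.inl ⟨h, by simpa using hx.symm⟩
  empty_not_mem h := by
    rcases mem_rootAtClusters.1 h with ⟨h, -⟩ | h | h
    · exact U.empty_not_mem h
    · exact notMem_empty ρ (h ▸ mem_univ ρ)
    · exact notMem_empty ρ (h ▸ mem_singleton_self ρ)
  laminar A hA B hB := by
    rcases mem_rootAtClusters.1 hA with ⟨hA, hρA⟩ | rfl | rfl <;>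
      rcases mem_rootAtClusters.1 hB with ⟨hB, hρB⟩ | rfl | rfl
    · refine (U.compat A hA B hB).imp_right (Or.imp_right (Or.resolve_right · fun h => ?_))
      exact (mem_union.1 (h ▸ mem_univ ρ)).elim hρA hρB
    all_goals first
      | exact Or.inl (subset_univ _)
      | exact Or.inr (Or.inl (subset_univ _))
      | exact Or.inl subset_rfl
      | exact Or.inr (Or.inr (inter_singleton_of_notMem ‹_›))
      | exact Or.inr (Or.inr (singleton_inter_of_notMem ‹_›))

theorem mem_rootAt {U : UTree n} {ρ : Fin n} :
    A ∈ (U.rootAt ρ).clusters ↔ (A ∈ U.splits ∧ ρ ∉ A) ∨ A = univ ∨ A = {ρ} :=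
  mem_rootAtClusters

theorem famResolvedU_of_famResolved_rootAt {U : UTree n} {ρ : Fin n} (hX : #X = 4)
    (h : famResolved (U.rootAt ρ).clusters X) : famResolvedU U.splits X := by
  obtain ⟨C, hC, h2⟩ := h
  rcases mem_rootAt.1 hC with ⟨hC, -⟩ | rfl | rfl
  · exact ⟨C, hC, h2⟩
  · rw [univ_inter] at h2
    omega
  · have := card_le_card (inter_subset_left (s₁ := {ρ}) (s₂ := X))
    rw [h2, card_singleton] at this
    omega

end UTree

namespace RTree

variable {n : ℕ} {R : RTree n} {A : Finset (Fin n)}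

noncomputable def unrootSplits (R : RTree n) : Finset (Finset (Fin n)) :=
  (R.clusters.erase univ).biUnion fun C => {C, univ \ C}

theorem mem_unrootSplits :
    A ∈ R.unrootSplits ↔ ∃ C ∈ R.clusters, C ≠ univ ∧ (A = C ∨ A = univ \ C) := by
  simp [unrootSplits, and_assoc, and_comm (a := _ ≠ univ)]

noncomputable def unroot (R : RTree n) : UTree n where
  splits := R.unrootSplits
  empty_not_mem h := by
    obtain ⟨C, hC, hCu, h | h⟩ := mem_unrootSplits.1 h
    · exact R.empty_not_mem (h ▸ hC)
    · exact hCu (univ_subset_iff.1 (sdiff_eq_empty_iff_subset.1 h.symm))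
  trivial_mem x := (eq_or_ne {x} univ).imp_right fun h =>
    mem_unrootSplits.2 ⟨{x}, R.singleton_mem x, h, Or.inl rfl⟩
  compl_mem A hA := by
    obtain ⟨C, hC, hCu, hA | hA⟩ := mem_unrootSplits.1 hA <;> rw [hA]
    · exact mem_unrootSplits.2 ⟨C, hC, hCu, Or.inr rfl⟩
    · exact mem_unrootSplits.2
        ⟨C, hC, hCu, Or.inl (Finset.sdiff_sdiff_eq_self (subset_univ C))⟩
  compat A hA B hB := by
    obtain ⟨C, hC, -, hAC⟩ := mem_unrootSplits.1 hA
    obtain ⟨D, hD, -, hBD⟩ := mem_unrootSplits.1 hB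
    have h := NestedOrDisjoint.compatible (R.laminar C hC D hD)
    rcases hAC with rfl | rfl <;> rcases hBD with rfl | rfl
    · exact h
    · exact h.symm.univ_sdiff_left.symm
    · exact h.univ_sdiff_left
    · exact h.univ_sdiff_left.symm.univ_sdiff_left.symm

theorem exists_inter_eq_of_mem_unroot (hA : A ∈ R.unroot.splits) (X : Finset (Fin n)) :
    ∃ C ∈ R.clusters, C ∩ X = A ∩ X ∨ C ∩ X = X \ (A ∩ X) := by
  obtain ⟨C, hC, -, hA | hA⟩ := mem_unrootSplits.1 hA <;> rw [hA]
  · exact ⟨C, hC, Or.inl rfl⟩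
  · refine ⟨C, hC, Or.inr ?_⟩
    rw [univ_sdiff_inter, Finset.sdiff_sdiff_eq_self inter_subset_right]

theorem unroot_fullyResolved (hR : R.FullyResolved) : R.unroot.FullyResolved := by
  intro X hX
  rw [mem_quartets] at hX
  obtain ⟨C, hC, h2C, hmin⟩ := R.exists_minimal_cluster (X := X) (by omega)
  have h2 := card_inter_eq_two_of_fullyResolved hR hC h2C hmin
  refine ⟨C, mem_unrootSplits.2 ⟨C, hC, fun h => ?_, Or.inl rfl⟩, h2⟩
  rw [h, univ_inter] at h2
  omega

theorem splits_subset_unroot {U : UTree n} {ρ : Fin n}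
    (h : (U.rootAt ρ).clusters ⊆ R.clusters) : U.splits ⊆ R.unroot.splits := by
  intro A hA
  by_cases hρ : ρ ∈ A
  · refine mem_unrootSplits.2 ⟨univ \ A, h (UTree.mem_rootAt.2 (Or.inl ⟨U.compl_mem A hA,
      by simp [hρ]⟩)), fun hu => U.empty_not_mem ((compl_eq_univ_iff A).1 hu ▸ hA),
      Or.inr (Finset.sdiff_sdiff_eq_self (subset_univ A)).symm⟩
  · exact mem_unrootSplits.2 ⟨A, h (UTree.mem_rootAt.2 (Or.inl ⟨hA, hρ⟩)),
      fun hu => hρ (hu ▸ mem_univ ρ), Or.inl rfl⟩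

end RTree

namespace UTree

open Equiv

variable {n : ℕ}

noncomputable def caterpillar (U : UTree n) (ρ : Fin n) (π : Perm (Fin n)) : UTree n :=
  ((U.rootAt ρ).caterpillar π).unroot

theorem splits_subset_caterpillar (U : UTree n) (ρ : Fin n) (π : Perm (Fin n)) :
    U.splits ⊆ (U.caterpillar ρ π).splits :=
  RTree.splits_subset_unroot (RTree.clusters_subset_caterpillar _ π)

theorem caterpillar_fullyResolved (U : UTree n) (ρ : Fin n) (π : Perm (Fin n)) :
    (U.caterpillar ρ π).FullyResolved :=
  RTree.unroot_fullyResolved (RTree.caterpillar_fullyResolved _ π)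

theorem caterpillar_mem_fullRef (U : UTree n) (ρ : Fin n) (π : Perm (Fin n)) :
    U.caterpillar ρ π ∈ U.FullRef :=
  ⟨U.caterpillar_fullyResolved ρ π, U.splits_subset_caterpillar ρ π⟩

theorem exists_suffix_inter_eq_of_famRestrictU_eq {U V : UTree n} {ρ : Fin n}
    {π : Perm (Fin n)} {X C B : Finset (Fin n)} (hX : #X = 4)
    (hunres : ¬ famResolved (U.rootAt ρ).clusters X) (hC : C ∈ (U.rootAt ρ).clusters)
    (h2C : 2 ≤ #(C ∩ X)) (hmin : ∀ D ∈ (U.rootAt ρ).clusters, D ⊂ C → #(D ∩ X) ≤ 1)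
    (hB : B ∈ V.splits) (h2B : #(B ∩ X) = 2)
    (h : famRestrictU (U.caterpillar ρ π).splits X = famRestrictU V.splits X) :
    ∃ t, (U.rootAt ρ).suffix π C t ∩ X = B ∩ X ∨
      (U.rootAt ρ).suffix π C t ∩ X = X \ (B ∩ X) := by
  obtain ⟨S, hS, hS2⟩ := U.caterpillar_fullyResolved ρ π X (mem_quartets.2 hX)
  have hSB := inter_eq_or_of_famRestrictU_eq hX hS hS2 hB h2B h
  obtain ⟨D, hD, hDS⟩ := RTree.exists_inter_eq_of_mem_unroot hS X
  have hD2 : #(D ∩ X) = 2 := by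
    rcases hDS with h | h <;> rw [h]
    · exact hS2
    · rw [card_sdiff_of_subset inter_subset_right]
      omega
  obtain ⟨t, rfl⟩ := RTree.eq_suffix_of_mem_caterpillar hX.le hunres hC h2C hmin hD hD2
  refine ⟨t, ?_⟩
  rcases hDS with h1 | h1 <;> rcases hSB with h2 | h2 <;> rw [h1, h2]
  · exact Or.inl rfl
  · exact Or.inr rfl
  · exact Or.inr rfl
  · exact Or.inl (Finset.sdiff_sdiff_eq_self inter_subset_right)

/-- The lowest cluster of the rooted tree meeting `X` twice contains three or four elements
of `X`: with three, only one side of the split of `V` fits in it; with four, either side may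
be the top pair. -/
theorem three_mul_card_famRestrictU_caterpillar_eq_le {U V : UTree n} (ρ : Fin n)
    {X : Finset (Fin n)} (hX : X ∈ (quartets n).filter
      fun X => famResolvedU V.splits X ∧ ¬ famResolvedU U.splits X) :
    3 * #(univ.filter fun π =>
        famRestrictU (U.caterpillar ρ π).splits X = famRestrictU V.splits X) ≤
      Fintype.card (Perm (Fin n)) := by
  obtain ⟨hX4, ⟨B, hB, h2B⟩, hunres⟩ := mem_filter.1 hX
  rw [mem_quartets] at hX4
  have hunresR : ¬ famResolved (U.rootAt ρ).clusters X := fun h =>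
    hunres (famResolvedU_of_famResolved_rootAt hX4 h)
  obtain ⟨C, hC, h2C, hmin⟩ := (U.rootAt ρ).exists_minimal_cluster (X := X) (by omega)
  have hmatch := fun π (hπ : π ∈ univ.filter fun π =>
      famRestrictU (U.caterpillar ρ π).splits X = famRestrictU V.splits X) =>
    exists_suffix_inter_eq_of_famRestrictU_eq hX4 hunresR hC h2C hmin hB h2B
      (mem_filter.1 hπ).2
  have h3 := RTree.three_le_card_inter hunresR hC h2C
  have hCX : C ∩ X ⊆ X := inter_subset_right
  rcases (show #(C ∩ X) = 3 ∨ #(C ∩ X) = 4 by have := card_le_card hCX; omega) with h3 | h4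
  · obtain ⟨Q, hQ, hQP, hQuniq⟩ := exists_side_subset (inter_subset_right (s₁ := B))
      (by rw [card_sdiff_of_subset hCX]; omega)
    have hQ2 : #Q = 2 := by
      rcases hQP with rfl | rfl
      · exact h2B
      · rw [card_sdiff_of_subset inter_subset_right]
        omega
    refine (Nat.mul_le_mul_left 3 (card_le_card fun π hπ => ?_)).trans
      (RTree.three_mul_card_exists_suffix_inter_eq_le hmin hQ hQ2 h3)
    obtain ⟨t, ht⟩ := hmatch π hπ
    exact mem_filter.2 ⟨mem_univ _, t,
      hQuniq _ (inter_subset_inter_right RTree.suffix_subset) ht⟩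
  · have hXC : X ⊆ C := by
      rw [← eq_of_subset_of_card_le hCX (by omega)]
      exact inter_subset_left
    refine (Nat.mul_le_mul_left 3 (card_le_card fun π hπ => ?_)).trans
      (RTree.three_mul_card_exists_suffix_inter_eq_or_le hmin hXC hX4 inter_subset_right h2B)
    exact mem_filter.2 ⟨mem_univ _, hmatch π hπ⟩

theorem add_two_thirds_card_setR2_le (T₁ T₂ : UTree n) :
    (#(setD T₁ T₂) : ℝ) + 2 / 3 * #(setR2 T₁ T₂) ≤
      ⨆ t₁ : T₁.FullRef, ⨅ t₂ : T₂.FullRef, quartetDist t₁.1 t₂.1 := by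
  rcases isEmpty_or_nonempty (Fin n) with hn | ⟨⟨ρ⟩⟩
  · have : quartets n = ∅ := powersetCard_eq_empty.2 (by simp)
    simp only [setD, setR2, famSetDU, famSetR2U, this, filter_empty, card_empty,
      Nat.cast_zero, mul_zero, add_zero]
    exact Real.iSup_nonneg fun _ => Real.iInf_nonneg fun _ => Nat.cast_nonneg _
  obtain ⟨π, hπ⟩ := exists_forall_add_two_thirds_le (quartets n)
    (fun T X => famResolvedU (splits T) X) (fun T X => famRestrictU (splits T) X) T₁ T₂
    (T₁.caterpillar ρ) (fun π X hX => T₁.caterpillar_fullyResolved ρ π X hX)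
    (fun π _ hX h => famRestrictU_eq_of_subset (T₁.splits_subset_caterpillar ρ π)
      (mem_quartets.1 hX) h)
    fun _ hX => three_mul_card_famRestrictU_caterpillar_eq_le ρ hX
  have : Nonempty T₂.FullRef := ⟨⟨_, T₂.caterpillar_mem_fullRef ρ 1⟩⟩
  exact le_iSup_iInf_of_exists ⟨_, T₁.caterpillar_mem_fullRef ρ π, fun t₂ ht₂ =>
    hπ t₂ fun X hX h => ⟨ht₂.1 X hX, famRestrictU_eq_of_subset ht₂.2 (mem_quartets.1 hX) h⟩⟩

theorem setD_comm (T₁ T₂ : UTree n) : setD T₁ T₂ = setD T₂ T₁ := by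
  ext X
  simp only [setD, famSetDU, mem_filter]
  tauto

theorem quartetDist_comm (t₁ t₂ : UTree n) : quartetDist t₁ t₂ = quartetDist t₂ t₁ := by
  rw [quartetDist, quartetDist, setD_comm]

theorem add_two_thirds_max_le_dHaus (T₁ T₂ : UTree n) :
    (#(setD T₁ T₂) : ℝ) + 2 / 3 * max (#(setR1 T₁ T₂) : ℝ) #(setR2 T₁ T₂) ≤
      dHaus T₁ T₂ := by
  have h := add_two_thirds_card_setR2_le T₂ T₁
  rw [setD_comm] at h
  exact add_mul_max_le_max
    (h.trans_eq (iSup_congr fun _ => iInf_congr fun _ => quartetDist_comm _ _))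
    (add_two_thirds_card_setR2_le T₁ T₂)

end UTree

/-- **Lemma (lower bound for the Hausdorff distance).**  For every two rooted
(resp. unrooted) phylogenies `T₁`, `T₂` over the same taxon set,
`d_Haus(T₁,T₂) ≥ |D(T₁,T₂)| + (2/3)·max{|R₁(T₁,T₂)|, |R₂(T₁,T₂)|}`. -/
theorem hausdorff_lower_bound (n : ℕ) :
    (∀ T₁ T₂ : RTree n,
      ((RTree.setD T₁ T₂).card : ℝ) +
          2 / 3 * max ((RTree.setR1 T₁ T₂).card : ℝ) ((RTree.setR2 T₁ T₂).card : ℝ) ≤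
        RTree.dHaus T₁ T₂) ∧
    ∀ T₁ T₂ : UTree n,
      ((UTree.setD T₁ T₂).card : ℝ) +
          2 / 3 * max ((UTree.setR1 T₁ T₂).card : ℝ) ((UTree.setR2 T₁ T₂).card : ℝ) ≤
        UTree.dHaus T₁ T₂ :=
  ⟨RTree.add_two_thirds_max_le_dHaus, UTree.add_two_thirds_max_le_dHaus⟩
end

section
/- For two rooted phylogenies T1 and T2 over the same taxon set, |S(T1,T2)| = Σ s(u,v), where the sum ranges over all internal non-root nodes u of T1 and all internal non-root nodes v of T2. -/
open Finset

attribute [local instance] Classical.propDecidable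

/-- `A` is a child of the node of `T` corresponding to the cluster `C`: it is a
maximal cluster of `T` properly contained in `C`. -/
def RTree.IsChild {n : ℕ} (T : RTree n) (A C : Finset (Fin n)) : Prop :=
  A ∈ T.clusters ∧ C ∈ T.clusters ∧ A ⊂ C ∧ ¬ ∃ B ∈ T.clusters, A ⊂ B ∧ B ⊂ C

/-- The triplet tree `xy|z` is strictly induced by the edge `{v, pa(v)}` of `T`,
where `v` is the node corresponding to the (non-root) cluster `C`: the leaves `x`
and `y` descend from `v` while `z` does not, and moreover `x` and `y` descend from
two distinct children of `v`. -/
def RTree.StrictlyInduces {n : ℕ} (T : RTree n) (C : Finset (Fin n))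
    (x y z : Fin n) : Prop :=
  C ∈ T.clusters ∧ C ≠ Finset.univ ∧ x ∈ C ∧ y ∈ C ∧ z ∉ C ∧
    ∃ A B : Finset (Fin n),
      T.IsChild A C ∧ T.IsChild B C ∧ A ≠ B ∧ x ∈ A ∧ y ∈ B

/-- `s(u,v)`: the number of triplet trees simultaneously strictly induced by the
edge `{u, pa(u)}` of `T₁` (where `u` is the node with cluster `C`) and by the edge
`{v, pa(v)}` of `T₂` (where `v` is the node with cluster `D`). -/
noncomputable def sCount {n : ℕ} (T₁ T₂ : RTree n) (C D : Finset (Fin n)) : ℕ :=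
  ((triplets n).filter fun X =>
    ∃ x y z : Fin n, X = {x, y, z} ∧
      T₁.StrictlyInduces C x y z ∧ T₂.StrictlyInduces D x y z).card

/-!
A triplet tree `xy|z` is strictly induced by the edge above `u` exactly when `u` is the lowest
common ancestor of `x ≠ y` and `z` lies outside `u`. So a triplet resolved as `xy|z` in both trees
is counted by `s(u,v)` for exactly one pair, `u = lca₁(x,y)` and `v = lca₂(x,y)`, while a triplet
counted by some `s(u,v)` has the same cherry `xy` in both trees. Double counting the incidences
between pairs `(u,v)` and triplets gives the identity.
-/

namespace RTree

variable {n : ℕ}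

def IsLCA (T : RTree n) (s C : Finset (Fin n)) : Prop :=
  C ∈ T.clusters ∧ s ⊆ C ∧ ∀ D ∈ T.clusters, s ⊆ D → C ⊆ D

/-- The clusters of the internal non-root nodes. -/
def innerClusters (T : RTree n) : Finset (Finset (Fin n)) :=
  T.clusters.filter fun C => 2 ≤ C.card ∧ C ≠ univ

variable {T : RTree n}

theorem subset_or_subset_of_mem_of_mem {C D : Finset (Fin n)} (hC : C ∈ T.clusters)
    (hD : D ∈ T.clusters) {a : Fin n} (haC : a ∈ C) (haD : a ∈ D) : C ⊆ D ∨ D ⊆ C := by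
  rcases T.laminar C hC D hD with h | h | h
  · exact .inl h
  · exact .inr h
  · exact absurd (h ▸ mem_inter.mpr ⟨haC, haD⟩) (notMem_empty a)

theorem IsLCA.unique {s C D : Finset (Fin n)} (hC : T.IsLCA s C) (hD : T.IsLCA s D) : C = D :=
  Subset.antisymm (hC.2.2 D hD.1 hD.2.1) (hD.2.2 C hC.1 hC.2.1)

theorem exists_isLCA {s : Finset (Fin n)} (hs : s.Nonempty) : ∃ C, T.IsLCA s C := by
  obtain ⟨M, hM, hmin⟩ := (T.clusters.filter (s ⊆ ·)).exists_min_image card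
    ⟨univ, mem_filter.mpr ⟨T.univ_mem, subset_univ s⟩⟩
  rw [mem_filter] at hM
  obtain ⟨a, ha⟩ := hs
  refine ⟨M, hM.1, hM.2, fun D hD hsD => ?_⟩
  rcases subset_or_subset_of_mem_of_mem hM.1 hD (hM.2 ha) (hsD ha) with h | h
  · exact h
  · exact (eq_of_subset_of_card_le h (hmin D (mem_filter.mpr ⟨hD, hsD⟩))).ge

theorem exists_isChild_superset {A C : Finset (Fin n)} (hA : A ∈ T.clusters)
    (hC : C ∈ T.clusters) (hAC : A ⊂ C) : ∃ B, T.IsChild B C ∧ A ⊆ B := by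
  obtain ⟨B, hB, hmax⟩ := (T.clusters.filter fun B => A ⊆ B ∧ B ⊂ C).exists_max_image card
    ⟨A, mem_filter.mpr ⟨hA, subset_rfl, hAC⟩⟩
  rw [mem_filter] at hB
  refine ⟨B, ⟨hB.1, hC, hB.2.2, ?_⟩, hB.2.1⟩
  rintro ⟨B', hB', hBB', hB'C⟩
  exact (card_lt_card hBB').not_ge
    (hmax B' (mem_filter.mpr ⟨hB', hB.2.1.trans hBB'.subset, hB'C⟩))

theorem IsChild.eq_or_eq_of_subset {A B C : Finset (Fin n)} (hA : T.IsChild A C)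
    (hB : B ∈ T.clusters) (hAB : A ⊆ B) (hBC : B ⊆ C) : B = A ∨ B = C := by
  by_contra! h
  exact hA.2.2.2 ⟨B, hB, hAB.ssubset_of_ne h.1.symm, hBC.ssubset_of_ne h.2⟩

theorem IsChild.disjoint {A B C : Finset (Fin n)} (hA : T.IsChild A C) (hB : T.IsChild B C)
    (hAB : A ≠ B) : Disjoint A B := by
  rw [disjoint_left]
  intro a haA haB
  rcases subset_or_subset_of_mem_of_mem hA.1 hB.1 haA haB with h | h
  · rcases hA.eq_or_eq_of_subset hB.1 h hB.2.2.1.subset with h' | h'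
    · exact hAB h'.symm
    · exact hB.2.2.1.ne h'
  · rcases hB.eq_or_eq_of_subset hA.1 h hA.2.2.1.subset with h' | h'
    · exact hAB h'
    · exact hA.2.2.1.ne h'

theorem strictlyInduces_iff {C : Finset (Fin n)} {x y z : Fin n} :
    T.StrictlyInduces C x y z ↔ T.IsLCA {x, y} C ∧ x ≠ y ∧ z ∉ C := by
  constructor
  · rintro ⟨hC, -, hx, hy, hz, A, B, hA, hB, hAB, hxA, hyB⟩
    have hyA : y ∉ A := disjoint_right.mp (hA.disjoint hB hAB) hyB
    refine ⟨⟨hC, insert_subset hx (singleton_subset_iff.mpr hy), fun D hD hxyD => ?_⟩,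
      fun hxy => hyA (hxy ▸ hxA), hz⟩
    rw [insert_subset_iff, singleton_subset_iff] at hxyD
    rcases subset_or_subset_of_mem_of_mem hC hD hx hxyD.1 with hCD | hDC
    · exact hCD
    rcases subset_or_subset_of_mem_of_mem hD hA.1 hxyD.1 hxA with hDA | hAD
    · exact absurd (hDA hxyD.2) hyA
    rcases hA.eq_or_eq_of_subset hD hAD hDC with rfl | rfl
    · exact absurd hxyD.2 hyA
    · exact subset_rfl
  · rintro ⟨⟨hC, hxyC, hmin⟩, hxy, hz⟩
    rw [insert_subset_iff, singleton_subset_iff] at hxyC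
    obtain ⟨hx, hy⟩ := hxyC
    obtain ⟨A, hA, hxA⟩ := exists_isChild_superset (T.singleton_mem x) hC
      ((singleton_subset_iff.mpr hx).ssubset_of_ne fun h => hxy (mem_singleton.mp (h ▸ hy)).symm)
    obtain ⟨B, hB, hyB⟩ := exists_isChild_superset (T.singleton_mem y) hC
      ((singleton_subset_iff.mpr hy).ssubset_of_ne fun h => hxy (mem_singleton.mp (h ▸ hx)))
    rw [singleton_subset_iff] at hxA hyB
    refine ⟨hC, fun h => hz (h ▸ mem_univ z), hx, hy, hz, A, B, hA, hB, ?_, hxA, hyB⟩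
    rintro rfl
    exact hA.2.2.1.not_subset (hmin A hA.1 (insert_subset hxA (singleton_subset_iff.mpr hyB)))

theorem exists_strictlyInduces {C : Finset (Fin n)} {x y z : Fin n} (hC : C ∈ T.clusters)
    (hx : x ∈ C) (hy : y ∈ C) (hz : z ∉ C) (hxy : x ≠ y) : ∃ M, T.StrictlyInduces M x y z := by
  obtain ⟨M, hM⟩ := T.exists_isLCA (insert_nonempty x {y})
  refine ⟨M, strictlyInduces_iff.mpr ⟨hM, hxy, fun hzM => hz ?_⟩⟩
  exact hM.2.2 C hC (insert_subset hx (singleton_subset_iff.mpr hy)) hzM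

theorem StrictlyInduces.mem_innerClusters {C : Finset (Fin n)} {x y z : Fin n}
    (h : T.StrictlyInduces C x y z) : C ∈ T.innerClusters := by
  obtain ⟨⟨hC, hxyC, -⟩, hxy, hz⟩ := strictlyInduces_iff.mp h
  refine mem_filter.mpr ⟨hC, card_pair hxy ▸ card_le_card hxyC, fun h => hz (h ▸ mem_univ z)⟩

theorem StrictlyInduces.inter_eq {C : Finset (Fin n)} {x y z : Fin n}
    (h : T.StrictlyInduces C x y z) : C ∩ {x, y, z} = {x, y} := by
  obtain ⟨-, -, hx, hy, hz, -⟩ := h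
  ext t
  simp only [mem_inter, mem_insert, mem_singleton]
  constructor
  · rintro ⟨htC, rfl | rfl | rfl⟩ <;> tauto
  · rintro (rfl | rfl) <;> tauto

theorem inter_eq_of_card_inter_eq_two {C D X : Finset (Fin n)} (hC : C ∈ T.clusters)
    (hD : D ∈ T.clusters) (hX : X.card = 3) (hCX : (C ∩ X).card = 2) (hDX : (D ∩ X).card = 2) :
    C ∩ X = D ∩ X := by
  have hmeet : ¬ Disjoint (C ∩ X) (D ∩ X) := fun hdisj => by
    have : (C ∩ X ∪ D ∩ X).card ≤ X.card :=
      card_le_card (union_subset inter_subset_right inter_subset_right)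
    rw [card_union_of_disjoint hdisj] at this
    omega
  obtain ⟨a, haC, haD⟩ := not_disjoint_iff.mp hmeet
  rcases subset_or_subset_of_mem_of_mem hC hD (mem_inter.mp haC).1 (mem_inter.mp haD).1 with h | h
  · exact eq_of_subset_of_card_le (inter_subset_inter_right h) (by omega)
  · exact (eq_of_subset_of_card_le (inter_subset_inter_right h) (by omega)).symm

theorem famRestrict_eq_of_card_inter_eq_two {C X : Finset (Fin n)} (hX : X.card = 3)
    (hC : C ∈ T.clusters) (hCX : (C ∩ X).card = 2) :
    famRestrict T.clusters X = X.powerset.filter fun Y => Y.card = 1 ∨ Y = C ∩ X ∨ Y = X := by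
  ext Y
  simp only [famRestrict, mem_filter, mem_image, mem_powerset]
  constructor
  · rintro ⟨⟨D, hD, rfl⟩, hne⟩
    have hsub : D ∩ X ⊆ X := inter_subset_right
    have hle : (D ∩ X).card ≤ 3 := hX ▸ card_le_card hsub
    have hpos : 0 < (D ∩ X).card := card_pos.mpr (nonempty_iff_ne_empty.mpr hne)
    refine ⟨hsub, ?_⟩
    rcases (by omega : (D ∩ X).card = 1 ∨ (D ∩ X).card = 2 ∨ (D ∩ X).card = 3) with h | h | h
    · exact .inl h
    · exact .inr (.inl (inter_eq_of_card_inter_eq_two hD hC hX h hCX))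
    · exact .inr (.inr (eq_of_subset_of_card_le hsub (by omega)))
  · rintro ⟨hsub, h1 | rfl | rfl⟩
    · obtain ⟨t, rfl⟩ := card_eq_one.mp h1
      exact ⟨⟨{t}, T.singleton_mem t, inter_eq_left.mpr hsub⟩, singleton_ne_empty t⟩
    · exact ⟨⟨C, hC, rfl⟩, fun h => by simp [h] at hCX⟩
    · exact ⟨⟨univ, T.univ_mem, univ_inter _⟩, fun h => by simp [h] at hX⟩

end RTree

theorem exists_eq_triple_of_card_inter_eq_two {n : ℕ} {C X : Finset (Fin n)} (hX : X.card = 3)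
    (hCX : (C ∩ X).card = 2) : ∃ x y z, X = {x, y, z} ∧ C ∩ X = {x, y} ∧ x ≠ y ∧ z ∉ C := by
  obtain ⟨x, y, hxy, hCXxy⟩ := card_eq_two.mp hCX
  have hout : (X \ C).card = 1 := by
    have := card_sdiff_add_card_inter X C
    rw [inter_comm, hCX, hX] at this
    omega
  obtain ⟨z, hz⟩ := card_eq_one.mp hout
  have hzX : z ∈ X \ C := hz ▸ mem_singleton_self z
  refine ⟨x, y, z, ?_, hCXxy, hxy, (mem_sdiff.mp hzX).2⟩
  rw [← sdiff_union_inter X C, hz, inter_comm, hCXxy]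
  ext t
  simp only [mem_union, mem_insert, mem_singleton]
  tauto

section JointInduction

variable {n : ℕ} {T₁ T₂ : RTree n}

def JointlyStrictlyInduce (T₁ T₂ : RTree n) (C D X : Finset (Fin n)) : Prop :=
  ∃ x y z : Fin n, X = {x, y, z} ∧ T₁.StrictlyInduces C x y z ∧ T₂.StrictlyInduces D x y z

theorem sCount_eq_card_filter (C D : Finset (Fin n)) :
    sCount T₁ T₂ C D = ((triplets n).filter (JointlyStrictlyInduce T₁ T₂ C D)).card := by
  unfold sCount JointlyStrictlyInduce
  convert rfl

theorem setS_subset_triplets : RTree.setS T₁ T₂ ⊆ triplets n :=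
  filter_subset _ _

theorem JointlyStrictlyInduce.mem_setS {C D X : Finset (Fin n)} (hX : X ∈ triplets n)
    (h : JointlyStrictlyInduce T₁ T₂ C D X) : X ∈ RTree.setS T₁ T₂ := by
  obtain ⟨x, y, z, rfl, h₁, h₂⟩ := h
  have hxy : x ≠ y := (RTree.strictlyInduces_iff.mp h₁).2.1
  have hC := h₁.inter_eq
  have hD := h₂.inter_eq
  have hX3 : ({x, y, z} : Finset (Fin n)).card = 3 := (mem_powersetCard.mp hX).2
  have hCc : (C ∩ {x, y, z}).card = 2 := hC ▸ card_pair hxy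
  have hDc : (D ∩ {x, y, z}).card = 2 := hD ▸ card_pair hxy
  refine mem_filter.mpr ⟨hX, ⟨C, h₁.1, hCc⟩, ⟨D, h₂.1, hDc⟩, ?_⟩
  rw [RTree.famRestrict_eq_of_card_inter_eq_two hX3 h₁.1 hCc,
    RTree.famRestrict_eq_of_card_inter_eq_two hX3 h₂.1 hDc, hC, hD]

theorem JointlyStrictlyInduce.unique {C D C' D' X : Finset (Fin n)} (hX : X.card = 3)
    (h : JointlyStrictlyInduce T₁ T₂ C D X) (h' : JointlyStrictlyInduce T₁ T₂ C' D' X) :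
    C = C' ∧ D = D' := by
  obtain ⟨x, y, z, rfl, h₁, h₂⟩ := h
  obtain ⟨x', y', z', hX', h₁', h₂'⟩ := h'
  obtain ⟨hC, hxy, -⟩ := RTree.strictlyInduces_iff.mp h₁
  obtain ⟨hD, -, -⟩ := RTree.strictlyInduces_iff.mp h₂
  obtain ⟨hC', hxy', -⟩ := RTree.strictlyInduces_iff.mp h₁'
  obtain ⟨hD', -, -⟩ := RTree.strictlyInduces_iff.mp h₂'
  have hinter := h₁.inter_eq
  have hinter' := h₁'.inter_eq
  rw [← hX'] at hinter'
  have hpair : ({x, y} : Finset (Fin n)) = {x', y'} := by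
    rw [← hinter, ← hinter']
    exact RTree.inter_eq_of_card_inter_eq_two hC.1 hC'.1 hX
      (hinter ▸ card_pair hxy) (hinter' ▸ card_pair hxy')
  rw [hpair] at hC hD
  exact ⟨hC.unique hC', hD.unique hD'⟩

theorem exists_jointlyStrictlyInduce_of_mem_setS {X : Finset (Fin n)}
    (hX : X ∈ RTree.setS T₁ T₂) : ∃ C D, JointlyStrictlyInduce T₁ T₂ C D X := by
  obtain ⟨hX3, ⟨C₀, hC₀, hC₀X⟩, -, hrestrict⟩ := mem_filter.mp hX
  have hmem : C₀ ∩ X ∈ famRestrict T₂.clusters X := by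
    rw [← hrestrict, famRestrict, mem_filter, mem_image]
    exact ⟨⟨C₀, hC₀, rfl⟩, fun h => by simp [h] at hC₀X⟩
  obtain ⟨⟨D₀, hD₀, hD₀X⟩, -⟩ := by simpa only [famRestrict, mem_filter, mem_image] using hmem
  obtain ⟨x, y, z, rfl, hpair, hxy, hz⟩ :=
    exists_eq_triple_of_card_inter_eq_two (mem_powersetCard.mp hX3).2 hC₀X
  have hxC₀ : x ∈ C₀ ∩ {x, y, z} := hpair ▸ mem_insert_self x {y}
  have hyC₀ : y ∈ C₀ ∩ {x, y, z} := hpair ▸ mem_insert_of_mem (mem_singleton_self y)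
  have hzD₀ : z ∉ D₀ := fun h => hz (mem_inter.mp (hD₀X ▸ mem_inter.mpr ⟨h, by simp⟩)).1
  obtain ⟨C, h₁⟩ := RTree.exists_strictlyInduces hC₀ (mem_inter.mp hxC₀).1 (mem_inter.mp hyC₀).1
    hz hxy
  obtain ⟨D, h₂⟩ := RTree.exists_strictlyInduces hD₀ (mem_inter.mp (hD₀X ▸ hxC₀)).1
    (mem_inter.mp (hD₀X ▸ hyC₀)).1 hzD₀ hxy
  exact ⟨C, D, x, y, z, rfl, h₁, h₂⟩

theorem card_filter_jointlyStrictlyInduce {X : Finset (Fin n)} (hX : X ∈ triplets n) :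
    ((T₁.innerClusters ×ˢ T₂.innerClusters).filter
        fun p => JointlyStrictlyInduce T₁ T₂ p.1 p.2 X).card =
      if X ∈ RTree.setS T₁ T₂ then 1 else 0 := by
  split_ifs with hS
  · obtain ⟨C, D, h⟩ := exists_jointlyStrictlyInduce_of_mem_setS hS
    obtain ⟨x, y, z, -, h₁, h₂⟩ := id h
    rw [card_eq_one]
    refine ⟨(C, D), ext fun ⟨C', D'⟩ => ?_⟩
    simp only [mem_filter, mem_product, mem_singleton, Prod.mk.injEq]
    constructor
    · rintro ⟨-, h'⟩
      obtain ⟨rfl, rfl⟩ := h.unique (mem_powersetCard.mp hX).2 h'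
      exact ⟨rfl, rfl⟩
    · rintro ⟨rfl, rfl⟩
      exact ⟨⟨h₁.mem_innerClusters, h₂.mem_innerClusters⟩, h⟩
  · rw [card_eq_zero, filter_eq_empty_iff]
    exact fun p _ h => hS (h.mem_setS hX)

end JointInduction

/-- **Lemma.**  For two rooted phylogenies `T₁` and `T₂` over the same taxon set,
`|S(T₁,T₂)| = Σ s(u,v)`, the sum ranging over all internal non-root nodes `u` of
`T₁` and all internal non-root nodes `v` of `T₂` (identified with their clusters:
the clusters of cardinality at least `2` other than the whole leaf set). -/
theorem card_setS_eq_sum_sCount (n : ℕ) (T₁ T₂ : RTree n) :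
    (RTree.setS T₁ T₂).card =
      ∑ C ∈ T₁.clusters.filter (fun C => 2 ≤ C.card ∧ C ≠ Finset.univ),
        ∑ D ∈ T₂.clusters.filter (fun D => 2 ≤ D.card ∧ D ≠ Finset.univ),
          sCount T₁ T₂ C D := by
  set r : Finset (Fin n) × Finset (Fin n) → Finset (Fin n) → Prop :=
    fun p X => JointlyStrictlyInduce T₁ T₂ p.1 p.2 X
  calc (RTree.setS T₁ T₂).card
      = ∑ X ∈ triplets n, if X ∈ RTree.setS T₁ T₂ then 1 else 0 := by
        rw [sum_boole, filter_mem_eq_inter, inter_eq_right.mpr setS_subset_triplets, Nat.cast_id]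
    _ = ∑ X ∈ triplets n, ((T₁.innerClusters ×ˢ T₂.innerClusters).bipartiteBelow r X).card :=
        sum_congr rfl fun X hX => (card_filter_jointlyStrictlyInduce hX).symm
    _ = ∑ p ∈ T₁.innerClusters ×ˢ T₂.innerClusters, ((triplets n).bipartiteAbove r p).card :=
        (sum_card_bipartiteAbove_eq_sum_card_bipartiteBelow _).symm
    _ = ∑ C ∈ T₁.innerClusters, ∑ D ∈ T₂.innerClusters, sCount T₁ T₂ C D := by
        simp only [sum_product, sCount_eq_card_filter]
        rfl
end
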